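/- arXiv:0706.1745 — 7 statements merged into one kernel-verified Lean document; each statement's English description precedes it below -/
import Mathlib

section
/- (Theorem 1: G_f is a Noether symmetry group for every f.) Let F : ℝ → ℝ be differentiable and let L(x,y,t,u,p,q,r) = ½p² + ½q² + 2(x²+y²)r² + 2ypr − 2xqr − F(u). Then for all real (x,y,t,u,p,q,r) the following four identities hold, expressing that the prolongations of the symmetries T, R, X̃, Ỹ annihilate L (each of these generators is divergence-free, so each satisfies the Noether condition with zero potential): (i) ∂L/∂t = 0; (ii) y·∂L/∂x − x·∂L/∂y + q·∂L/∂p − p·∂L/∂q = 0; (iii) ∂L/∂x − 2y·∂L/∂t + 2r·∂L/∂q = 0; (iv) ∂L/∂y + 2x·∂L/∂t − 2r·∂L/∂p = 0. -/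
/-- The Lagrangian of the semilinear Kohn–Laplace equation, as a function of
the seven variables `(x, y, t, u, p, q, r)`:
`L = ½p² + ½q² + 2(x²+y²)r² + 2ypr − 2xqr − F(u)`. -/
noncomputable def klLagrangian (F : ℝ → ℝ) (x y t u p q r : ℝ) : ℝ :=
  (1 / 2) * p ^ 2 + (1 / 2) * q ^ 2 + 2 * (x ^ 2 + y ^ 2) * r ^ 2
    + 2 * y * p * r - 2 * x * q * r - F u

lemma kl_deriv_x (F : ℝ → ℝ) (x y t u p q r : ℝ) :
    deriv (fun x' => klLagrangian F x' y t u p q r) x = 4 * x * r ^ 2 - 2 * q * r := by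
  have h1 : HasDerivAt (fun x' : ℝ => x' ^ 2) (2 * x) x := by
    simpa using hasDerivAt_pow 2 x
  have h2 : HasDerivAt (fun x' : ℝ => 2 * (x' ^ 2 + y ^ 2) * r ^ 2)
      (2 * (2 * x) * r ^ 2) x := ((h1.add_const (y ^ 2)).const_mul 2).mul_const (r ^ 2)
  have h3 : HasDerivAt (fun x' : ℝ => 2 * x' * q * r) (2 * q * r) x := by
    have := (((hasDerivAt_id x).const_mul 2).mul_const q).mul_const r
    simpa using this
  have h : HasDerivAt (fun x' => klLagrangian F x' y t u p q r)
      (2 * (2 * x) * r ^ 2 - 2 * q * r) x := by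
    unfold klLagrangian
    exact ((((h2.const_add _).add_const _).sub h3).sub_const (F u))
  rw [h.deriv]; ring

lemma kl_deriv_y (F : ℝ → ℝ) (x y t u p q r : ℝ) :
    deriv (fun y' => klLagrangian F x y' t u p q r) y = 4 * y * r ^ 2 + 2 * p * r := by
  have h1 : HasDerivAt (fun y' : ℝ => y' ^ 2) (2 * y) y := by
    simpa using hasDerivAt_pow 2 y
  have h2 : HasDerivAt (fun y' : ℝ => 2 * (x ^ 2 + y' ^ 2) * r ^ 2)
      (2 * (2 * y) * r ^ 2) y := ((h1.const_add (x ^ 2)).const_mul 2).mul_const (r ^ 2)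
  have h3 : HasDerivAt (fun y' : ℝ => 2 * y' * p * r) (2 * p * r) y := by
    have := (((hasDerivAt_id y).const_mul 2).mul_const p).mul_const r
    simpa using this
  have h : HasDerivAt (fun y' => klLagrangian F x y' t u p q r)
      (2 * (2 * y) * r ^ 2 + 2 * p * r) y := by
    unfold klLagrangian
    exact ((((h2.const_add _).add h3).sub_const (2 * x * q * r)).sub_const (F u))
  rw [h.deriv]; ring

lemma kl_deriv_p (F : ℝ → ℝ) (x y t u p q r : ℝ) :
    deriv (fun p' => klLagrangian F x y t u p' q r) p = p + 2 * y * r := by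
  have h1 : HasDerivAt (fun p' : ℝ => (1 / 2 : ℝ) * p' ^ 2) ((1 / 2) * (2 * p)) p := by
    have : HasDerivAt (fun p' : ℝ => p' ^ 2) (2 * p) p := by simpa using hasDerivAt_pow 2 p
    exact this.const_mul _
  have h2 : HasDerivAt (fun p' : ℝ => 2 * y * p' * r) (2 * y * r) p := by
    have := (((hasDerivAt_id p).const_mul (2 * y)).mul_const r)
    simpa [mul_assoc] using this
  have h : HasDerivAt (fun p' => klLagrangian F x y t u p' q r)
      ((1 / 2) * (2 * p) + 2 * y * r) p := by
    unfold klLagrangian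
    exact (((((h1.add_const _).add_const _).add h2).sub_const _).sub_const (F u))
  rw [h.deriv]; ring

lemma kl_deriv_q (F : ℝ → ℝ) (x y t u p q r : ℝ) :
    deriv (fun q' => klLagrangian F x y t u p q' r) q = q - 2 * x * r := by
  have h1 : HasDerivAt (fun q' : ℝ => (1 / 2 : ℝ) * q' ^ 2) ((1 / 2) * (2 * q)) q := by
    have : HasDerivAt (fun q' : ℝ => q' ^ 2) (2 * q) q := by simpa using hasDerivAt_pow 2 q
    exact this.const_mul _
  have h2 : HasDerivAt (fun q' : ℝ => 2 * x * q' * r) (2 * x * r) q := by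
    have := (((hasDerivAt_id q).const_mul (2 * x)).mul_const r)
    simpa [mul_assoc] using this
  have h : HasDerivAt (fun q' => klLagrangian F x y t u p q' r)
      ((1 / 2) * (2 * q) - 2 * x * r) q := by
    unfold klLagrangian
    exact (((((h1.const_add _).add_const _).add_const _).sub h2).sub_const (F u))
  rw [h.deriv]; ring

/-- Theorem 1: `G_f = {T, R, X̃, Ỹ}` is a Noether symmetry group
for every `f`. For any differentiable `F` the first prolongations of
`T, R, X̃, Ỹ` annihilate the Lagrangian `L`:
(i) `∂L/∂t = 0`;
(ii) `y ∂L/∂x − x ∂L/∂y + q ∂L/∂p − p ∂L/∂q = 0`;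
(iii) `∂L/∂x − 2y ∂L/∂t + 2r ∂L/∂q = 0`;
(iv) `∂L/∂y + 2x ∂L/∂t − 2r ∂L/∂p = 0`. -/
theorem gf_noether_symmetry (F : ℝ → ℝ) (hF : Differentiable ℝ F) :
    ∀ x y t u p q r : ℝ,
      deriv (fun t' => klLagrangian F x y t' u p q r) t = 0 ∧
      y * deriv (fun x' => klLagrangian F x' y t u p q r) x
        - x * deriv (fun y' => klLagrangian F x y' t u p q r) y
        + q * deriv (fun p' => klLagrangian F x y t u p' q r) p
        - p * deriv (fun q' => klLagrangian F x y t u p q' r) q = 0 ∧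
      deriv (fun x' => klLagrangian F x' y t u p q r) x
        - 2 * y * deriv (fun t' => klLagrangian F x y t' u p q r) t
        + 2 * r * deriv (fun q' => klLagrangian F x y t u p q' r) q = 0 ∧
      deriv (fun y' => klLagrangian F x y' t u p q r) y
        + 2 * x * deriv (fun t' => klLagrangian F x y t' u p q r) t
        - 2 * r * deriv (fun p' => klLagrangian F x y t u p' q r) p = 0 := by
  intro x y t u p q r
  have ht : deriv (fun t' => klLagrangian F x y t' u p q r) t = 0 := by
    unfold klLagrangian; exact deriv_const _ _
  refine ⟨ht, ?_, ?_, ?_⟩ <;>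
    · simp only [kl_deriv_x, kl_deriv_y, kl_deriv_p, kl_deriv_q, ht]; ring
end

section
/- (Lemma: W_β is a Noether symmetry.) Let k ∈ ℝ and let β : ℝ³ → ℝ be a C² function satisfying Δ_{H¹}β + kβ = 0. Then for every C² function u = u(x,y,t) on ℝ³ the following identity holds pointwise: −kβu + β_x(u_x + 2y·u_t) + β_y(u_y − 2x·u_t) + β_t(4(x²+y²)u_t + 2y·u_x − 2x·u_y) = ∂_x[(β_x + 2yβ_t)u] + ∂_y[(β_y − 2xβ_t)u] + ∂_t[(2yβ_x − 2xβ_y + 4(x²+y²)β_t)u]. In other words, the prolonged action of the symmetry W_β = β∂_u on the Lagrangian L_k = ½u_x² + ½u_y² + 2(x²+y²)u_t² + 2y·u_x·u_t − 2x·u_y·u_t − (k/2)u² is a total divergence. -/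
/-- Partial derivative with respect to the first coordinate (x). -/
noncomputable def pdx (u : ℝ × ℝ × ℝ → ℝ) : ℝ × ℝ × ℝ → ℝ :=
  fun p => fderiv ℝ u p (1, 0, 0)

/-- Partial derivative with respect to the second coordinate (y). -/
noncomputable def pdy (u : ℝ × ℝ × ℝ → ℝ) : ℝ × ℝ × ℝ → ℝ :=
  fun p => fderiv ℝ u p (0, 1, 0)

/-- Partial derivative with respect to the third coordinate (t). -/
noncomputable def pdt (u : ℝ × ℝ × ℝ → ℝ) : ℝ × ℝ × ℝ → ℝ :=
  fun p => fderiv ℝ u p (0, 0, 1)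

/-- The Kohn–Laplace operator on the Heisenberg group H¹:
`Δ u = u_xx + u_yy + 4(x²+y²) u_tt + 4y u_xt − 4x u_yt`. -/
noncomputable def KohnLaplace (u : ℝ × ℝ × ℝ → ℝ) : ℝ × ℝ × ℝ → ℝ :=
  fun p => pdx (pdx u) p + pdy (pdy u) p
    + 4 * (p.1 ^ 2 + p.2.1 ^ 2) * pdt (pdt u) p
    + 4 * p.2.1 * pdt (pdx u) p - 4 * p.1 * pdt (pdy u) p

/-! With the left-invariant vector fields `X = ∂_x + 2y ∂_t` and `Y = ∂_y − 2x ∂_t`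
(`heisX`, `heisY`), the Kohn–Laplacian is `X² + Y²`: `X(Xβ)(p)` is the Hessian of `β` at `p`
evaluated twice on the vector `X(p)`, because the coefficients of `X` are constant along `X`
(likewise for `Y`), and the mixed terms match by symmetry of the Hessian. The flux
`(F, G, 2yF − 2xG)` has Euclidean divergence `XF + YG`, and the fluxes of the identity have this
form with `F = (Xβ) u`, `G = (Yβ) u`. By the Leibniz rule the divergence is
`(X²β + Y²β) u + Xβ·Xu + Yβ·Yu = −kβu + Xβ·Xu + Yβ·Yu`, the left-hand side in coordinates. -/

theorem fderiv_fderiv_apply_const {𝕜 E F : Type*} [NontriviallyNormedField 𝕜]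
    [NormedAddCommGroup E] [NormedSpace 𝕜 E] [NormedAddCommGroup F] [NormedSpace 𝕜 F]
    {f : E → F} {p : E} (hf : DifferentiableAt 𝕜 (fderiv 𝕜 f) p) (v w : E) :
    fderiv 𝕜 (fun q => fderiv 𝕜 f q w) p v = fderiv 𝕜 (fderiv 𝕜 f) p v w := by
  simp [fderiv_clm_apply hf (differentiableAt_const w)]

namespace ContinuousLinearMap

variable {F : Type*} [NormedAddCommGroup F] [NormedSpace ℝ F]

theorem apply_one_zero_eq_add_smul (L : ℝ × ℝ × ℝ →L[ℝ] F) (c : ℝ) :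
    L (1, 0, c) = L (1, 0, 0) + c • L (0, 0, 1) := by
  rw [← map_smul, ← map_add]; simp

theorem apply_zero_one_eq_add_smul (L : ℝ × ℝ × ℝ →L[ℝ] F) (c : ℝ) :
    L (0, 1, c) = L (0, 1, 0) + c • L (0, 0, 1) := by
  rw [← map_smul, ← map_add]; simp

end ContinuousLinearMap

noncomputable def heisX (f : ℝ × ℝ × ℝ → ℝ) : ℝ × ℝ × ℝ → ℝ :=
  fun p => pdx f p + 2 * p.2.1 * pdt f p

noncomputable def heisY (f : ℝ × ℝ × ℝ → ℝ) : ℝ × ℝ × ℝ → ℝ :=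
  fun p => pdy f p - 2 * p.1 * pdt f p

section FirstOrder

variable {f g : ℝ × ℝ × ℝ → ℝ} {p : ℝ × ℝ × ℝ}

theorem heisX_apply (f : ℝ × ℝ × ℝ → ℝ) (p : ℝ × ℝ × ℝ) :
    heisX f p = fderiv ℝ f p (1, 0, 2 * p.2.1) := by
  rw [ContinuousLinearMap.apply_one_zero_eq_add_smul, smul_eq_mul]; rfl

theorem heisY_apply (f : ℝ × ℝ × ℝ → ℝ) (p : ℝ × ℝ × ℝ) :
    heisY f p = fderiv ℝ f p (0, 1, -2 * p.1) := by
  rw [ContinuousLinearMap.apply_zero_one_eq_add_smul, smul_eq_mul, heisY, pdy, pdt]; ring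

theorem heisX_mul (hf : DifferentiableAt ℝ f p) (hg : DifferentiableAt ℝ g p) :
    heisX (fun q => f q * g q) p = heisX f p * g p + f p * heisX g p := by
  simp only [heisX_apply, fderiv_fun_mul hf hg, add_apply, smul_apply, smul_eq_mul]; ring

theorem heisY_mul (hf : DifferentiableAt ℝ f p) (hg : DifferentiableAt ℝ g p) :
    heisY (fun q => f q * g q) p = heisY f p * g p + f p * heisY g p := by
  simp only [heisY_apply, fderiv_fun_mul hf hg, add_apply, smul_apply, smul_eq_mul]; ring

theorem pdx_add_pdy_add_pdt_eq_heisX_add_heisY (hf : DifferentiableAt ℝ f p)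
    (hg : DifferentiableAt ℝ g p) :
    pdx f p + pdy g p + pdt (fun q => 2 * q.2.1 * f q - 2 * q.1 * g q) p
      = heisX f p + heisY g p := by
  unfold pdt
  rw [fderiv_fun_sub (by fun_prop) (by fun_prop), fderiv_fun_mul (by fun_prop) hf,
    fderiv_fun_mul (by fun_prop) hg, fderiv_const_mul (by fun_prop),
    fderiv_const_mul (by fun_prop), fderiv.fst differentiableAt_snd]
  simp only [fderiv_snd, fderiv_fst, sub_apply, add_apply, smul_apply, smul_eq_mul,
    ContinuousLinearMap.comp_apply, ContinuousLinearMap.coe_snd', ContinuousLinearMap.coe_fst',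
    mul_zero, add_zero, heisX, heisY, pdt]
  ring

theorem heisX_mul_heisX_add_heisY_mul_heisY (f g : ℝ × ℝ × ℝ → ℝ) (p : ℝ × ℝ × ℝ) :
    heisX f p * heisX g p + heisY f p * heisY g p
      = pdx f p * (pdx g p + 2 * p.2.1 * pdt g p) + pdy f p * (pdy g p - 2 * p.1 * pdt g p)
        + pdt f p * (4 * (p.1 ^ 2 + p.2.1 ^ 2) * pdt g p
            + 2 * p.2.1 * pdx g p - 2 * p.1 * pdy g p) := by
  simp only [heisX, heisY]; ring

end FirstOrder

section SecondOrder

variable {β : ℝ × ℝ × ℝ → ℝ} {p : ℝ × ℝ × ℝ}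

theorem fderiv_heisX_apply (hβ : DifferentiableAt ℝ (fderiv ℝ β) p) (w : ℝ × ℝ × ℝ) :
    fderiv ℝ (heisX β) p w = fderiv ℝ (fderiv ℝ β) p w (1, 0, 0)
      + 2 * w.2.1 * pdt β p + 2 * p.2.1 * fderiv ℝ (fderiv ℝ β) p w (0, 0, 1) := by
  have hβx : DifferentiableAt ℝ (fun q => fderiv ℝ β q (1, 0, 0)) p := by fun_prop
  have hβt : DifferentiableAt ℝ (fun q => fderiv ℝ β q (0, 0, 1)) p := by fun_prop
  unfold heisX pdx pdt
  rw [fderiv_fun_add hβx (by fun_prop), fderiv_fun_mul (by fun_prop) hβt,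
    fderiv_const_mul (by fun_prop), fderiv.fst differentiableAt_snd]
  simp only [fderiv_snd, add_apply, fderiv_fderiv_apply_const hβ, smul_apply, smul_eq_mul,
    ContinuousLinearMap.comp_apply, ContinuousLinearMap.coe_snd', ContinuousLinearMap.coe_fst']
  ring

theorem fderiv_heisY_apply (hβ : DifferentiableAt ℝ (fderiv ℝ β) p) (w : ℝ × ℝ × ℝ) :
    fderiv ℝ (heisY β) p w = fderiv ℝ (fderiv ℝ β) p w (0, 1, 0)
      - 2 * w.1 * pdt β p - 2 * p.1 * fderiv ℝ (fderiv ℝ β) p w (0, 0, 1) := by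
  have hβy : DifferentiableAt ℝ (fun q => fderiv ℝ β q (0, 1, 0)) p := by fun_prop
  have hβt : DifferentiableAt ℝ (fun q => fderiv ℝ β q (0, 0, 1)) p := by fun_prop
  unfold heisY pdy pdt
  rw [fderiv_fun_sub hβy (by fun_prop), fderiv_fun_mul (by fun_prop) hβt,
    fderiv_const_mul (by fun_prop)]
  simp only [fderiv_fst, sub_apply, fderiv_fderiv_apply_const hβ, add_apply, smul_apply,
    smul_eq_mul, ContinuousLinearMap.coe_fst']
  ring

theorem heisX_heisX_apply (hβ : DifferentiableAt ℝ (fderiv ℝ β) p) :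
    heisX (heisX β) p = fderiv ℝ (fderiv ℝ β) p (1, 0, 2 * p.2.1) (1, 0, 2 * p.2.1) := by
  rw [heisX_apply, fderiv_heisX_apply hβ]
  simp only [ContinuousLinearMap.apply_one_zero_eq_add_smul _ (2 * p.2.1), add_apply, smul_apply,
    smul_eq_mul]
  ring

theorem heisY_heisY_apply (hβ : DifferentiableAt ℝ (fderiv ℝ β) p) :
    heisY (heisY β) p = fderiv ℝ (fderiv ℝ β) p (0, 1, -2 * p.1) (0, 1, -2 * p.1) := by
  rw [heisY_apply, fderiv_heisY_apply hβ]
  simp only [ContinuousLinearMap.apply_zero_one_eq_add_smul _ (-2 * p.1), add_apply, smul_apply,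
    smul_eq_mul]
  ring

theorem kohnLaplace_eq_heisX_heisX_add_heisY_heisY (hβ : ContDiffAt ℝ 2 β p) :
    KohnLaplace β p = heisX (heisX β) p + heisY (heisY β) p := by
  have hd : DifferentiableAt ℝ (fderiv ℝ β) p :=
    (hβ.fderiv_right le_rfl).differentiableAt one_ne_zero
  have hsymm := hβ.isSymmSndFDerivAt (by simp)
  rw [heisX_heisX_apply hd, heisY_heisY_apply hd, KohnLaplace]
  unfold pdx pdy pdt
  simp only [fderiv_fderiv_apply_const hd,
    ContinuousLinearMap.apply_one_zero_eq_add_smul _ (2 * p.2.1),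
    ContinuousLinearMap.apply_zero_one_eq_add_smul _ (-2 * p.1), add_apply, smul_apply,
    smul_eq_mul]
  linear_combination
    (2 * p.1) * hsymm (0, 1, 0) (0, 0, 1) - (2 * p.2.1) * hsymm (1, 0, 0) (0, 0, 1)

end SecondOrder

/-- Lemma: `W_β` is a Noether symmetry: if `β` is C² with
`Δ_{H¹}β + kβ = 0`, then for every C² function `u` on ℝ³ the prolonged action
of `W_β = β ∂_u` on the Lagrangian `L_k` is a total divergence:
`−kβu + β_x(u_x + 2y u_t) + β_y(u_y − 2x u_t)
  + β_t(4(x²+y²)u_t + 2y u_x − 2x u_y)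
  = ∂_x[(β_x+2yβ_t)u] + ∂_y[(β_y−2xβ_t)u]
  + ∂_t[(2yβ_x−2xβ_y+4(x²+y²)β_t)u]`. -/
theorem wBeta_noether_symmetry (k : ℝ) (β : ℝ × ℝ × ℝ → ℝ)
    (hβ : ContDiff ℝ 2 β) (hβeq : ∀ p, KohnLaplace β p + k * β p = 0)
    (u : ℝ × ℝ × ℝ → ℝ) (hu : ContDiff ℝ 2 u) :
    ∀ p : ℝ × ℝ × ℝ,
      -(k * β p * u p) + pdx β p * (pdx u p + 2 * p.2.1 * pdt u p)
        + pdy β p * (pdy u p - 2 * p.1 * pdt u p)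
        + pdt β p * (4 * (p.1 ^ 2 + p.2.1 ^ 2) * pdt u p
            + 2 * p.2.1 * pdx u p - 2 * p.1 * pdy u p)
      = pdx (fun q => (pdx β q + 2 * q.2.1 * pdt β q) * u q) p
        + pdy (fun q => (pdy β q - 2 * q.1 * pdt β q) * u q) p
        + pdt (fun q => (2 * q.2.1 * pdx β q - 2 * q.1 * pdy β q
            + 4 * (q.1 ^ 2 + q.2.1 ^ 2) * pdt β q) * u q) p := by
  intro p
  have hβ' : Differentiable ℝ (fderiv ℝ β) :=
    (hβ.fderiv_right (m := 1) (by norm_num)).differentiable one_ne_zero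
  have hXβ : DifferentiableAt ℝ (heisX β) p := by unfold heisX pdx pdt; fun_prop
  have hYβ : DifferentiableAt ℝ (heisY β) p := by unfold heisY pdy pdt; fun_prop
  have hup : DifferentiableAt ℝ u p := hu.differentiable (by norm_num) p
  have hflux : ∀ q : ℝ × ℝ × ℝ, (2 * q.2.1 * pdx β q - 2 * q.1 * pdy β q
      + 4 * (q.1 ^ 2 + q.2.1 ^ 2) * pdt β q) * u q
      = 2 * q.2.1 * (heisX β q * u q) - 2 * q.1 * (heisY β q * u q) := fun q => by
    simp only [heisX, heisY]; ring
  have hX : ∀ q, pdx β q + 2 * q.2.1 * pdt β q = heisX β q := fun _ => rfl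
  have hY : ∀ q, pdy β q - 2 * q.1 * pdt β q = heisY β q := fun _ => rfl
  simp only [hflux, hX, hY]
  rw [pdx_add_pdy_add_pdt_eq_heisX_add_heisY (hXβ.fun_mul hup) (hYβ.fun_mul hup),
    heisX_mul hXβ hup, heisY_mul hYβ hup]
  linear_combination (u p) * kohnLaplace_eq_heisX_heisX_add_heisY_heisY (p := p) hβ.contDiffAt
    - u p * hβeq p - heisX_mul_heisX_add_heisY_mul_heisY β u p
end

section
/- (Lemma: E is not a Noether symmetry of the exponential Kohn–Laplace equation.) There is no C¹ map φ = (φ¹,φ²,φ³) of the seven variables (x,y,t,u,p,q,r) with values in ℝ³ such that for every smooth function u : ℝ³ → ℝ and every point (x,y,t) ∈ ℝ³, the total divergence of φ along u equals u_x² + u_y² + 4(x²+y²)u_t² + 4y·u_x·u_t − 4x·u_y·u_t − 2e^u. -/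
/-- The total divergence along `u` of a vector `φ = (φ¹,φ²,φ³)` depending on
the seven variables `(x, y, t, u, u_x, u_y, u_t)`: the ordinary divergence of
the vector field `(x,y,t) ↦ φ(x,y,t,u,u_x,u_y,u_t)`. -/
noncomputable def totalDiv (φ : ℝ × ℝ × ℝ × ℝ × ℝ × ℝ × ℝ → ℝ × ℝ × ℝ)
    (u : ℝ × ℝ × ℝ → ℝ) : ℝ × ℝ × ℝ → ℝ :=
  fun p =>
    pdx (fun q => (φ (q.1, q.2.1, q.2.2, u q, pdx u q, pdy u q, pdt u q)).1) p
    + pdy (fun q => (φ (q.1, q.2.1, q.2.2, u q, pdx u q, pdy u q, pdt u q)).2.1) p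
    + pdt (fun q => (φ (q.1, q.2.1, q.2.2, u q, pdx u q, pdy u q, pdt u q)).2.2) p

local notation "E7" => ℝ × ℝ × ℝ × ℝ × ℝ × ℝ × ℝ

/-- From the master identity, derive a contradiction. -/
lemma my_no_noether (φ : E7 → ℝ × ℝ × ℝ) (hφ : ContDiff ℝ 1 φ)
    (master : ∀ x₀ y₀ t₀ u₀ p₀ q₀ r₀ a b c : ℝ,
      (fderiv ℝ φ (x₀, y₀, t₀, u₀, p₀, q₀, r₀) (1, 0, 0, p₀, a, b, c)).1
      + (fderiv ℝ φ (x₀, y₀, t₀, u₀, p₀, q₀, r₀) (0, 1, 0, q₀, b, 0, 0)).2.1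
      + (fderiv ℝ φ (x₀, y₀, t₀, u₀, p₀, q₀, r₀) (0, 0, 1, r₀, c, 0, 0)).2.2
      = p₀ ^ 2 + q₀ ^ 2 + 4 * (x₀ ^ 2 + y₀ ^ 2) * r₀ ^ 2
        + 4 * y₀ * p₀ * r₀ - 4 * x₀ * q₀ * r₀ - 2 * Real.exp u₀) : False := by
  have hφd : Differentiable ℝ φ := hφ.differentiable one_ne_zero
  set ep : E7 := (0, 0, 0, 0, 1, 0, 0) with hep
  set eq7 : E7 := (0, 0, 0, 0, 0, 1, 0) with heq7
  set er7 : E7 := (0, 0, 0, 0, 0, 0, 1) with her7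
  set φ1 : E7 → ℝ := fun Z => (φ Z).1 with hφ1
  set φ2 : E7 → ℝ := fun Z => (φ Z).2.1 with hφ2
  set φ3 : E7 → ℝ := fun Z => (φ Z).2.2 with hφ3
  have hd1 : Differentiable ℝ φ1 := fun Z => ((hφd Z).hasFDerivAt.fst).differentiableAt
  have hd2 : Differentiable ℝ φ2 := fun Z => ((hφd Z).hasFDerivAt.snd.fst).differentiableAt
  have hd3 : Differentiable ℝ φ3 := fun Z => ((hφd Z).hasFDerivAt.snd.snd).differentiableAt
  have hD1 : ∀ (Z w : E7), fderiv ℝ φ1 Z w = (fderiv ℝ φ Z w).1 := fun Z w => by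
    rw [((hφd Z).hasFDerivAt.fst).fderiv]; rfl
  have hD2 : ∀ (Z w : E7), fderiv ℝ φ2 Z w = (fderiv ℝ φ Z w).2.1 := fun Z w => by
    rw [((hφd Z).hasFDerivAt.snd.fst).fderiv]; rfl
  have hD3 : ∀ (Z w : E7), fderiv ℝ φ3 Z w = (fderiv ℝ φ Z w).2.2 := fun Z w => by
    rw [((hφd Z).hasFDerivAt.snd.snd).fderiv]; rfl
  -- master at an arbitrary point Z (via Prod eta)
  have masterZ : ∀ (Z : E7) (a b c : ℝ),
      (fderiv ℝ φ Z (1, 0, 0, Z.2.2.2.2.1, a, b, c)).1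
      + (fderiv ℝ φ Z (0, 1, 0, Z.2.2.2.2.2.1, b, 0, 0)).2.1
      + (fderiv ℝ φ Z (0, 0, 1, Z.2.2.2.2.2.2, c, 0, 0)).2.2
      = Z.2.2.2.2.1 ^ 2 + Z.2.2.2.2.2.1 ^ 2
        + 4 * (Z.1 ^ 2 + Z.2.1 ^ 2) * Z.2.2.2.2.2.2 ^ 2
        + 4 * Z.2.1 * Z.2.2.2.2.1 * Z.2.2.2.2.2.2
        - 4 * Z.1 * Z.2.2.2.2.2.1 * Z.2.2.2.2.2.2 - 2 * Real.exp Z.2.2.2.1 :=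
    fun Z a b c => master Z.1 Z.2.1 Z.2.2.1 Z.2.2.2.1 Z.2.2.2.2.1 Z.2.2.2.2.2.1 Z.2.2.2.2.2.2 a b c
  -- relation 1 : (Dφ Z e_p).1 = 0
  have rel1 : ∀ Z : E7, (fderiv ℝ φ Z ep).1 = 0 := by
    intro Z
    have h1 := masterZ Z 1 0 0
    have h0 := masterZ Z 0 0 0
    have e : fderiv ℝ φ Z (1, 0, 0, Z.2.2.2.2.1, 1, 0, 0)
        = fderiv ℝ φ Z (1, 0, 0, Z.2.2.2.2.1, 0, 0, 0) + fderiv ℝ φ Z ep := by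
      rw [← map_add]; congr 1; rw [hep]; simp
    rw [e, Prod.fst_add] at h1
    linarith
  -- relation 2 : (Dφ Z e_q).1 + (Dφ Z e_p).2.1 = 0
  have rel2 : ∀ Z : E7, (fderiv ℝ φ Z eq7).1 + (fderiv ℝ φ Z ep).2.1 = 0 := by
    intro Z
    have h1 := masterZ Z 0 1 0
    have h0 := masterZ Z 0 0 0
    have e1 : fderiv ℝ φ Z (1, 0, 0, Z.2.2.2.2.1, 0, 1, 0)
        = fderiv ℝ φ Z (1, 0, 0, Z.2.2.2.2.1, 0, 0, 0) + fderiv ℝ φ Z eq7 := by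
      rw [← map_add]; congr 1; rw [heq7]; simp
    have e2 : fderiv ℝ φ Z (0, 1, 0, Z.2.2.2.2.2.1, 1, 0, 0)
        = fderiv ℝ φ Z (0, 1, 0, Z.2.2.2.2.2.1, 0, 0, 0) + fderiv ℝ φ Z ep := by
      rw [← map_add]; congr 1; rw [hep]; simp
    rw [e1, e2, Prod.fst_add, Prod.snd_add, Prod.fst_add] at h1
    linarith
  -- relation 3 : (Dφ Z e_r).1 + (Dφ Z e_p).2.2 = 0
  have rel3 : ∀ Z : E7, (fderiv ℝ φ Z er7).1 + (fderiv ℝ φ Z ep).2.2 = 0 := by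
    intro Z
    have h1 := masterZ Z 0 0 1
    have h0 := masterZ Z 0 0 0
    have e1 : fderiv ℝ φ Z (1, 0, 0, Z.2.2.2.2.1, 0, 0, 1)
        = fderiv ℝ φ Z (1, 0, 0, Z.2.2.2.2.1, 0, 0, 0) + fderiv ℝ φ Z er7 := by
      rw [← map_add]; congr 1; rw [her7]; simp
    have e2 : fderiv ℝ φ Z (0, 0, 1, Z.2.2.2.2.2.2, 1, 0, 0)
        = fderiv ℝ φ Z (0, 0, 1, Z.2.2.2.2.2.2, 0, 0, 0) + fderiv ℝ φ Z ep := by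
      rw [← map_add]; congr 1; rw [hep]; simp
    rw [e1, e2, Prod.fst_add, Prod.snd_add, Prod.snd_add] at h1
    linarith
  -- an affine-function helper
  have affine : ∀ (g : ℝ → ℝ) (κ : ℝ), (∀ x, HasDerivAt g κ x) → ∀ s, g s = g 0 + s * κ := by
    intro g κ h s
    have hh : ∀ x, HasDerivAt (fun s => g s - s * κ) 0 x := fun x => by
      have h' := (h x).sub ((hasDerivAt_id' x).mul_const κ)
      rwa [one_mul, sub_self] at h'
    have h2 := is_const_of_deriv_eq_zero (fun x => (hh x).differentiableAt)
      (fun x => (hh x).deriv) s 0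
    linarith
  have curve : ∀ (Z : E7) (s : ℝ), HasDerivAt (fun s : ℝ => Z + s • ep) ep s := fun Z s => by
    simpa using ((hasDerivAt_id s).smul_const ep).const_add Z
  -- φ1 is invariant under translations in the e_p direction
  have hA : ∀ (Z : E7) (s : ℝ), φ1 (Z + s • ep) = φ1 Z := by
    intro Z s
    have hder : ∀ x : ℝ, HasDerivAt (fun s : ℝ => φ1 (Z + s • ep)) 0 x := by
      intro x
      have h := ((hφd (Z + x • ep)).hasFDerivAt.fst).comp_hasDerivAt x (curve Z x)
      have hval : ((ContinuousLinearMap.fst ℝ ℝ (ℝ × ℝ)).comp (fderiv ℝ φ (Z + x • ep))) ep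
          = (0 : ℝ) := rel1 (Z + x • ep)
      rw [hval] at h
      exact h
    have := affine _ 0 hder s
    simpa using this
  -- hence so is its derivative
  have hA' : ∀ (Z : E7) (s : ℝ) (w : E7), fderiv ℝ φ1 (Z + s • ep) w = fderiv ℝ φ1 Z w := by
    intro Z s w
    have hfun : (fun W : E7 => φ1 (W + s • ep)) = φ1 := funext fun W => hA W s
    have h2 : HasFDerivAt (fun W : E7 => φ1 (W + s • ep))
        ((fderiv ℝ φ1 (Z + s • ep)).comp (ContinuousLinearMap.id ℝ _)) Z :=
      (hd1 _).hasFDerivAt.comp Z ((hasFDerivAt_id Z).add_const (s • ep))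
    rw [hfun] at h2
    conv_rhs => rw [h2.fderiv]
    rfl
  -- φ2 and φ3 are affine along e_p
  have hB : ∀ (Z : E7) (s : ℝ), φ2 (Z + s • ep) = φ2 Z - s * fderiv ℝ φ1 Z eq7 := by
    intro Z s
    have hder : ∀ x : ℝ, HasDerivAt (fun s : ℝ => φ2 (Z + s • ep)) (-(fderiv ℝ φ1 Z eq7)) x := by
      intro x
      have h := ((hφd (Z + x • ep)).hasFDerivAt.snd.fst).comp_hasDerivAt x (curve Z x)
      have e2 : (fderiv ℝ φ (Z + x • ep) eq7).1 = fderiv ℝ φ1 Z eq7 := by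
        rw [← hD1]; exact hA' Z x eq7
      have e1 : ((ContinuousLinearMap.fst ℝ ℝ ℝ).comp
          ((ContinuousLinearMap.snd ℝ ℝ (ℝ × ℝ)).comp (fderiv ℝ φ (Z + x • ep)))) ep
          = -(fderiv ℝ φ1 Z eq7) := by
        show (fderiv ℝ φ (Z + x • ep) ep).2.1 = -(fderiv ℝ φ1 Z eq7)
        have h3 := rel2 (Z + x • ep)
        linarith
      rw [e1] at h
      exact h
    have := affine _ _ hder s
    simp only [zero_smul, add_zero] at this
    linarith
  have hC : ∀ (Z : E7) (s : ℝ), φ3 (Z + s • ep) = φ3 Z - s * fderiv ℝ φ1 Z er7 := by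
    intro Z s
    have hder : ∀ x : ℝ, HasDerivAt (fun s : ℝ => φ3 (Z + s • ep)) (-(fderiv ℝ φ1 Z er7)) x := by
      intro x
      have h := ((hφd (Z + x • ep)).hasFDerivAt.snd.snd).comp_hasDerivAt x (curve Z x)
      have e2 : (fderiv ℝ φ (Z + x • ep) er7).1 = fderiv ℝ φ1 Z er7 := by
        rw [← hD1]; exact hA' Z x er7
      have e1 : ((ContinuousLinearMap.snd ℝ ℝ ℝ).comp
          ((ContinuousLinearMap.snd ℝ ℝ (ℝ × ℝ)).comp (fderiv ℝ φ (Z + x • ep)))) ep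
          = -(fderiv ℝ φ1 Z er7) := by
        show (fderiv ℝ φ (Z + x • ep) ep).2.2 = -(fderiv ℝ φ1 Z er7)
        have h3 := rel3 (Z + x • ep)
        linarith
      rw [e1] at h
      exact h
    have := affine _ _ hder s
    simp only [zero_smul, add_zero] at this
    linarith
  -- rewrite the slopes in C¹ terms
  have hB2 : ∀ (Z : E7) (s : ℝ), φ2 (Z + s • ep) = φ2 Z + s * (φ2 (Z + ep) - φ2 Z) := by
    intro Z s
    have h1 := hB Z s
    have h2 := hB Z 1
    simp only [one_smul] at h2
    have hκ : fderiv ℝ φ1 Z eq7 = φ2 Z - φ2 (Z + ep) := by linarith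
    rw [h1, hκ]; ring
  have hC2 : ∀ (Z : E7) (s : ℝ), φ3 (Z + s • ep) = φ3 Z + s * (φ3 (Z + ep) - φ3 Z) := by
    intro Z s
    have h1 := hC Z s
    have h2 := hC Z 1
    simp only [one_smul] at h2
    have hκ : fderiv ℝ φ1 Z er7 = φ3 Z - φ3 (Z + ep) := by linarith
    rw [h1, hκ]; ring
  -- affine dependence of the y- and t- derivatives along e_p
  have hT2aff : ∀ p : ℝ, fderiv ℝ φ2 ((0 : E7) + p • ep) (0, 1, 0, 0, 0, 0, 0)
      = fderiv ℝ φ2 0 (0, 1, 0, 0, 0, 0, 0)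
        + p * (fderiv ℝ φ2 ((0 : E7) + ep) (0, 1, 0, 0, 0, 0, 0)
          - fderiv ℝ φ2 0 (0, 1, 0, 0, 0, 0, 0)) := by
    intro p
    have hfun : (fun W : E7 => φ2 (W + p • ep))
        = fun W => φ2 W + p * (φ2 (W + ep) - φ2 W) :=
      funext fun W => hB2 W p
    have hL : HasFDerivAt (fun W : E7 => φ2 (W + p • ep))
        ((fderiv ℝ φ2 ((0 : E7) + p • ep)).comp (ContinuousLinearMap.id ℝ _)) 0 :=
      (hd2 _).hasFDerivAt.comp 0 ((hasFDerivAt_id 0).add_const (p • ep))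
    have hshift : HasFDerivAt (fun W : E7 => φ2 (W + ep))
        ((fderiv ℝ φ2 ((0 : E7) + ep)).comp (ContinuousLinearMap.id ℝ _)) 0 :=
      (hd2 _).hasFDerivAt.comp 0 ((hasFDerivAt_id 0).add_const ep)
    have hb0 : HasFDerivAt φ2 (fderiv ℝ φ2 (0 : E7)) 0 := (hd2 0).hasFDerivAt
    have hR : HasFDerivAt (fun W : E7 => φ2 W + p * (φ2 (W + ep) - φ2 W))
        (fderiv ℝ φ2 (0 : E7)
          + p • (((fderiv ℝ φ2 ((0 : E7) + ep)).comp (ContinuousLinearMap.id ℝ _))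
            - fderiv ℝ φ2 (0 : E7))) 0 :=
      hb0.add ((hshift.sub hb0).const_mul p)
    rw [hfun] at hL
    have huniq := hL.unique hR
    calc fderiv ℝ φ2 ((0 : E7) + p • ep) (0, 1, 0, 0, 0, 0, 0)
        = ((fderiv ℝ φ2 ((0 : E7) + p • ep)).comp (ContinuousLinearMap.id ℝ _))
            (0, 1, 0, 0, 0, 0, 0) := rfl
      _ = _ := by rw [huniq]; simp [smul_eq_mul]; try ring
  have hT3aff : ∀ p : ℝ, fderiv ℝ φ3 ((0 : E7) + p • ep) (0, 0, 1, 0, 0, 0, 0)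
      = fderiv ℝ φ3 0 (0, 0, 1, 0, 0, 0, 0)
        + p * (fderiv ℝ φ3 ((0 : E7) + ep) (0, 0, 1, 0, 0, 0, 0)
          - fderiv ℝ φ3 0 (0, 0, 1, 0, 0, 0, 0)) := by
    intro p
    have hfun : (fun W : E7 => φ3 (W + p • ep))
        = fun W => φ3 W + p * (φ3 (W + ep) - φ3 W) :=
      funext fun W => hC2 W p
    have hL : HasFDerivAt (fun W : E7 => φ3 (W + p • ep))
        ((fderiv ℝ φ3 ((0 : E7) + p • ep)).comp (ContinuousLinearMap.id ℝ _)) 0 :=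
      (hd3 _).hasFDerivAt.comp 0 ((hasFDerivAt_id 0).add_const (p • ep))
    have hshift : HasFDerivAt (fun W : E7 => φ3 (W + ep))
        ((fderiv ℝ φ3 ((0 : E7) + ep)).comp (ContinuousLinearMap.id ℝ _)) 0 :=
      (hd3 _).hasFDerivAt.comp 0 ((hasFDerivAt_id 0).add_const ep)
    have hb0 : HasFDerivAt φ3 (fderiv ℝ φ3 (0 : E7)) 0 := (hd3 0).hasFDerivAt
    have hR : HasFDerivAt (fun W : E7 => φ3 W + p * (φ3 (W + ep) - φ3 W))
        (fderiv ℝ φ3 (0 : E7)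
          + p • (((fderiv ℝ φ3 ((0 : E7) + ep)).comp (ContinuousLinearMap.id ℝ _))
            - fderiv ℝ φ3 (0 : E7))) 0 :=
      hb0.add ((hshift.sub hb0).const_mul p)
    rw [hfun] at hL
    have huniq := hL.unique hR
    calc fderiv ℝ φ3 ((0 : E7) + p • ep) (0, 0, 1, 0, 0, 0, 0)
        = ((fderiv ℝ φ3 ((0 : E7) + p • ep)).comp (ContinuousLinearMap.id ℝ _))
            (0, 0, 1, 0, 0, 0, 0) := rfl
      _ = _ := by rw [huniq]; simp [smul_eq_mul]; try ring
  -- the three instances of the master identity on the p-axis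
  have hXp : ∀ p : ℝ, ((0, 0, 0, 0, p, 0, 0) : E7) = (0 : E7) + p • ep := by
    intro p; rw [hep]; simp
  have inst : ∀ p : ℝ,
      (fderiv ℝ φ1 0 (1, 0, 0, 0, 0, 0, 0) + p * fderiv ℝ φ1 0 (0, 0, 0, 1, 0, 0, 0))
      + (fderiv ℝ φ2 0 (0, 1, 0, 0, 0, 0, 0)
          + p * (fderiv ℝ φ2 ((0 : E7) + ep) (0, 1, 0, 0, 0, 0, 0)
            - fderiv ℝ φ2 0 (0, 1, 0, 0, 0, 0, 0)))
      + (fderiv ℝ φ3 0 (0, 0, 1, 0, 0, 0, 0)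
          + p * (fderiv ℝ φ3 ((0 : E7) + ep) (0, 0, 1, 0, 0, 0, 0)
            - fderiv ℝ φ3 0 (0, 0, 1, 0, 0, 0, 0)))
      = p ^ 2 - 2 := by
    intro p
    have hm := master 0 0 0 0 p 0 0 0 0 0
    have hT1 : (fderiv ℝ φ ((0, 0, 0, 0, p, 0, 0) : E7) (1, 0, 0, p, 0, 0, 0)).1
        = fderiv ℝ φ1 0 (1, 0, 0, 0, 0, 0, 0) + p * fderiv ℝ φ1 0 (0, 0, 0, 1, 0, 0, 0) := by
      rw [← hD1, hXp p, hA' 0 p,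
        show ((1, 0, 0, p, 0, 0, 0) : E7)
          = ((1, 0, 0, 0, 0, 0, 0) : E7) + p • ((0, 0, 0, 1, 0, 0, 0) : E7) by simp,
        map_add, map_smul, smul_eq_mul]
    have hT2 : (fderiv ℝ φ ((0, 0, 0, 0, p, 0, 0) : E7) (0, 1, 0, 0, 0, 0, 0)).2.1
        = fderiv ℝ φ2 0 (0, 1, 0, 0, 0, 0, 0)
          + p * (fderiv ℝ φ2 ((0 : E7) + ep) (0, 1, 0, 0, 0, 0, 0)
            - fderiv ℝ φ2 0 (0, 1, 0, 0, 0, 0, 0)) := by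
      rw [← hD2, hXp p, hT2aff p]
    have hT3 : (fderiv ℝ φ ((0, 0, 0, 0, p, 0, 0) : E7) (0, 0, 1, 0, 0, 0, 0)).2.2
        = fderiv ℝ φ3 0 (0, 0, 1, 0, 0, 0, 0)
          + p * (fderiv ℝ φ3 ((0 : E7) + ep) (0, 0, 1, 0, 0, 0, 0)
            - fderiv ℝ φ3 0 (0, 0, 1, 0, 0, 0, 0)) := by
      rw [← hD3, hXp p, hT3aff p]
    rw [hT1, hT2, hT3] at hm
    rw [hm]
    norm_num [Real.exp_zero]
  have k0 := inst 0
  have k1 := inst 1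
  have km := inst (-1)
  norm_num at k0 k1 km
  linarith

lemma my_master (φ : ℝ × ℝ × ℝ × ℝ × ℝ × ℝ × ℝ → ℝ × ℝ × ℝ) (hφ : ContDiff ℝ 1 φ)
    (hdiv : ∀ u : ℝ × ℝ × ℝ → ℝ, ContDiff ℝ (⊤ : ℕ∞) u → ∀ p : ℝ × ℝ × ℝ,
      totalDiv φ u p
        = (pdx u p) ^ 2 + (pdy u p) ^ 2
          + 4 * (p.1 ^ 2 + p.2.1 ^ 2) * (pdt u p) ^ 2
          + 4 * p.2.1 * pdx u p * pdt u p - 4 * p.1 * pdy u p * pdt u p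
          - 2 * Real.exp (u p))
    (x₀ y₀ t₀ u₀ p₀ q₀ r₀ a b c : ℝ) :
    (fderiv ℝ φ (x₀, y₀, t₀, u₀, p₀, q₀, r₀) (1, 0, 0, p₀, a, b, c)).1
    + (fderiv ℝ φ (x₀, y₀, t₀, u₀, p₀, q₀, r₀) (0, 1, 0, q₀, b, 0, 0)).2.1
    + (fderiv ℝ φ (x₀, y₀, t₀, u₀, p₀, q₀, r₀) (0, 0, 1, r₀, c, 0, 0)).2.2
    = p₀ ^ 2 + q₀ ^ 2 + 4 * (x₀ ^ 2 + y₀ ^ 2) * r₀ ^ 2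
      + 4 * y₀ * p₀ * r₀ - 4 * x₀ * q₀ * r₀ - 2 * Real.exp u₀ := by
  set u : ℝ × ℝ × ℝ → ℝ := fun w =>
    u₀ + p₀ * (w.1 - x₀) + q₀ * (w.2.1 - y₀) + r₀ * (w.2.2 - t₀)
      + a / 2 * (w.1 - x₀) ^ 2 + b * ((w.1 - x₀) * (w.2.1 - y₀))
      + c * ((w.1 - x₀) * (w.2.2 - t₀)) with hu
  have husm : ContDiff ℝ (⊤ : ℕ∞) u := by rw [hu]; fun_prop
  have hud : Differentiable ℝ u := husm.differentiable (by simp)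
  -- the three partial derivatives of u
  have hpdx : ∀ w : ℝ × ℝ × ℝ,
      pdx u w = p₀ + a * (w.1 - x₀) + b * (w.2.1 - y₀) + c * (w.2.2 - t₀) := by
    rintro ⟨x, y, t⟩
    have hline : HasDerivAt (fun s : ℝ => ((s, y, t) : ℝ × ℝ × ℝ)) (1, 0, 0) x :=
      (hasDerivAt_id x).prodMk ((hasDerivAt_const x y).prodMk (hasDerivAt_const x t))
    have h2 : HasDerivAt (fun s : ℝ => u (s, y, t)) (fderiv ℝ u (x, y, t) (1, 0, 0)) x :=
      by have := (hud (x, y, t)).hasFDerivAt.comp_hasDerivAt x hline; exact this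
    have i : HasDerivAt (fun s : ℝ => s - x₀) 1 x := (hasDerivAt_id x).sub_const x₀
    have h1 : HasDerivAt (fun s : ℝ => u (s, y, t))
        (p₀ + a * (x - x₀) + b * (y - y₀) + c * (t - t₀)) x := by
      have h0 := ((((((hasDerivAt_const x u₀).add (i.const_mul p₀)).add
        (hasDerivAt_const x (q₀ * (y - y₀)))).add
        (hasDerivAt_const x (r₀ * (t - t₀)))).add
        ((i.pow 2).const_mul (a / 2))).add
        ((i.mul_const (y - y₀)).const_mul b)).add
        ((i.mul_const (t - t₀)).const_mul c)
      convert h0 using 1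
      all_goals first | rfl | ring
    exact h2.unique h1
  have hpdy : ∀ w : ℝ × ℝ × ℝ, pdy u w = q₀ + b * (w.1 - x₀) := by
    rintro ⟨x, y, t⟩
    have hline : HasDerivAt (fun s : ℝ => ((x, s, t) : ℝ × ℝ × ℝ)) (0, 1, 0) y :=
      (hasDerivAt_const y x).prodMk ((hasDerivAt_id y).prodMk (hasDerivAt_const y t))
    have h2 : HasDerivAt (fun s : ℝ => u (x, s, t)) (fderiv ℝ u (x, y, t) (0, 1, 0)) y :=
      by have := (hud (x, y, t)).hasFDerivAt.comp_hasDerivAt y hline; exact this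
    have i : HasDerivAt (fun s : ℝ => s - y₀) 1 y := (hasDerivAt_id y).sub_const y₀
    have h1 : HasDerivAt (fun s : ℝ => u (x, s, t)) (q₀ + b * (x - x₀)) y := by
      have h0 := (((((hasDerivAt_const y (u₀ + p₀ * (x - x₀))).add
        (i.const_mul q₀)).add
        (hasDerivAt_const y (r₀ * (t - t₀)))).add
        (hasDerivAt_const y (a / 2 * (x - x₀) ^ 2))).add
        ((i.const_mul (x - x₀)).const_mul b)).add
        (hasDerivAt_const y (c * ((x - x₀) * (t - t₀))))
      -- h0 : HasDerivAt (fun s => u₀ + p₀*(x-x₀) + q₀*(s-y₀) + r₀*(t-t₀) + a/2*(x-x₀)^2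
      --        + b*((x-x₀)*(s-y₀)) + c*((x-x₀)*(t-t₀))) (...) y   (up to assoc of the +)
      have heq : (fun s : ℝ => u (x, s, t)) = fun s : ℝ =>
          u₀ + p₀ * (x - x₀) + q₀ * (s - y₀) + r₀ * (t - t₀) + a / 2 * (x - x₀) ^ 2
            + b * ((x - x₀) * (s - y₀)) + c * ((x - x₀) * (t - t₀)) := by
        funext s; simp only [hu]; try ring
      rw [heq]
      convert h0 using 1
      all_goals first | rfl | ring
    exact h2.unique h1
  have hpdt : ∀ w : ℝ × ℝ × ℝ, pdt u w = r₀ + c * (w.1 - x₀) := by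
    rintro ⟨x, y, t⟩
    have hline : HasDerivAt (fun s : ℝ => ((x, y, s) : ℝ × ℝ × ℝ)) (0, 0, 1) t :=
      (hasDerivAt_const t x).prodMk ((hasDerivAt_const t y).prodMk (hasDerivAt_id t))
    have h2 : HasDerivAt (fun s : ℝ => u (x, y, s)) (fderiv ℝ u (x, y, t) (0, 0, 1)) t :=
      by have := (hud (x, y, t)).hasFDerivAt.comp_hasDerivAt t hline; exact this
    have i : HasDerivAt (fun s : ℝ => s - t₀) 1 t := (hasDerivAt_id t).sub_const t₀
    have h1 : HasDerivAt (fun s : ℝ => u (x, y, s)) (r₀ + c * (x - x₀)) t := by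
      have h0 := (((hasDerivAt_const t
          (u₀ + p₀ * (x - x₀) + q₀ * (y - y₀))).add (i.const_mul r₀)).add
          (hasDerivAt_const t (a / 2 * (x - x₀) ^ 2 + b * ((x - x₀) * (y - y₀))))).add
          ((i.const_mul (x - x₀)).const_mul c)
      have heq : (fun s : ℝ => u (x, y, s)) = fun s : ℝ =>
          u₀ + p₀ * (x - x₀) + q₀ * (y - y₀) + r₀ * (s - t₀)
            + (a / 2 * (x - x₀) ^ 2 + b * ((x - x₀) * (y - y₀)))
            + c * ((x - x₀) * (s - t₀)) := by
        funext s; simp only [hu]; try ring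
      rw [heq]
      convert h0 using 1
      all_goals first | rfl | ring
    exact h2.unique h1
  -- value of u at the base point
  have hu0 : u (x₀, y₀, t₀) = u₀ := by simp only [hu]; ring
  have hφd : Differentiable ℝ φ := hφ.differentiable one_ne_zero
  set X : ℝ × ℝ × ℝ × ℝ × ℝ × ℝ × ℝ := (x₀, y₀, t₀, u₀, p₀, q₀, r₀) with hX
  have hjeq : (fun q : ℝ × ℝ × ℝ =>
      ((q.1, q.2.1, q.2.2, u q, pdx u q, pdy u q, pdt u q) : ℝ × ℝ × ℝ × ℝ × ℝ × ℝ × ℝ))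
      = fun q => (q.1, q.2.1, q.2.2, u q,
          p₀ + a * (q.1 - x₀) + b * (q.2.1 - y₀) + c * (q.2.2 - t₀),
          q₀ + b * (q.1 - x₀), r₀ + c * (q.1 - x₀)) := by
    funext q; rw [hpdx q, hpdy q, hpdt q]
  -- differentiability of the composed field
  have hcompd : Differentiable ℝ
      (fun q : ℝ × ℝ × ℝ => φ (q.1, q.2.1, q.2.2, u q, pdx u q, pdy u q, pdt u q)) := by
    have hjd : Differentiable ℝ (fun q : ℝ × ℝ × ℝ =>
        ((q.1, q.2.1, q.2.2, u q,
          p₀ + a * (q.1 - x₀) + b * (q.2.1 - y₀) + c * (q.2.2 - t₀),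
          q₀ + b * (q.1 - x₀), r₀ + c * (q.1 - x₀)) : ℝ × ℝ × ℝ × ℝ × ℝ × ℝ × ℝ)) := by
      fun_prop
    rw [show (fun q : ℝ × ℝ × ℝ => φ (q.1, q.2.1, q.2.2, u q, pdx u q, pdy u q, pdt u q))
      = fun q => φ (q.1, q.2.1, q.2.2, u q,
          p₀ + a * (q.1 - x₀) + b * (q.2.1 - y₀) + c * (q.2.2 - t₀),
          q₀ + b * (q.1 - x₀), r₀ + c * (q.1 - x₀)) from
      funext fun q => congrArg φ (congrFun hjeq q)]
    exact fun q => (hφd _).comp q (hjd q)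
  -- the base point of the jet
  have hγ0 : ((x₀, y₀, t₀, u (x₀, y₀, t₀), pdx u (x₀, y₀, t₀), pdy u (x₀, y₀, t₀),
      pdt u (x₀, y₀, t₀)) : ℝ × ℝ × ℝ × ℝ × ℝ × ℝ × ℝ) = X := by
    have h5 : pdx u (x₀, y₀, t₀) = p₀ := by rw [hpdx]; ring
    have h6 : pdy u (x₀, y₀, t₀) = q₀ := by rw [hpdy]; ring
    have h7 : pdt u (x₀, y₀, t₀) = r₀ := by rw [hpdt]; ring
    rw [hu0, h5, h6, h7]
  have hφX : HasFDerivAt φ (fderiv ℝ φ X) ((x₀, y₀, t₀, u (x₀, y₀, t₀), pdx u (x₀, y₀, t₀),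
      pdy u (x₀, y₀, t₀), pdt u (x₀, y₀, t₀)) : ℝ × ℝ × ℝ × ℝ × ℝ × ℝ × ℝ) := by
    rw [hγ0]; exact (hφd X).hasFDerivAt
  have ix : HasDerivAt (fun s : ℝ => s - x₀) 1 x₀ := (hasDerivAt_id x₀).sub_const x₀
  have iy : HasDerivAt (fun s : ℝ => s - y₀) 1 y₀ := (hasDerivAt_id y₀).sub_const y₀
  have it : HasDerivAt (fun s : ℝ => s - t₀) 1 t₀ := (hasDerivAt_id t₀).sub_const t₀
  -- ===================== first direction =====================
  have hu1 : HasDerivAt (fun s : ℝ => u (s, y₀, t₀)) p₀ x₀ := by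
    have heq : (fun s : ℝ => u (s, y₀, t₀)) = fun s : ℝ =>
        u₀ + p₀ * (s - x₀) + q₀ * (y₀ - y₀) + r₀ * (t₀ - t₀) + a / 2 * (s - x₀) ^ 2
          + b * ((s - x₀) * (y₀ - y₀)) + c * ((s - x₀) * (t₀ - t₀)) := by
      funext s; simp only [hu]; try ring
    rw [heq]
    have h0 := ((((((hasDerivAt_const x₀ u₀).add (ix.const_mul p₀)).add
      (hasDerivAt_const x₀ (q₀ * (y₀ - y₀)))).add
      (hasDerivAt_const x₀ (r₀ * (t₀ - t₀)))).add
      ((ix.pow 2).const_mul (a / 2))).add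
      ((ix.mul_const (y₀ - y₀)).const_mul b)).add
      ((ix.mul_const (t₀ - t₀)).const_mul c)
    convert h0 using 1
    all_goals first | rfl | ring
  have hp1 : HasDerivAt (fun s : ℝ => pdx u (s, y₀, t₀)) a x₀ := by
    have heq : (fun s : ℝ => pdx u (s, y₀, t₀)) = fun s : ℝ =>
        p₀ + a * (s - x₀) + b * (y₀ - y₀) + c * (t₀ - t₀) := funext fun s => hpdx (s, y₀, t₀)
    rw [heq]
    have h0 := (((hasDerivAt_const x₀ p₀).add (ix.const_mul a)).add
      (hasDerivAt_const x₀ (b * (y₀ - y₀)))).add (hasDerivAt_const x₀ (c * (t₀ - t₀)))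
    convert h0 using 1
    all_goals first | rfl | ring
  have hq1 : HasDerivAt (fun s : ℝ => pdy u (s, y₀, t₀)) b x₀ := by
    have heq : (fun s : ℝ => pdy u (s, y₀, t₀)) = fun s : ℝ =>
        q₀ + b * (s - x₀) := funext fun s => hpdy (s, y₀, t₀)
    rw [heq]
    have h0 := (hasDerivAt_const x₀ q₀).add (ix.const_mul b)
    convert h0 using 1
    all_goals first | rfl | ring
  have hr1 : HasDerivAt (fun s : ℝ => pdt u (s, y₀, t₀)) c x₀ := by
    have heq : (fun s : ℝ => pdt u (s, y₀, t₀)) = fun s : ℝ =>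
        r₀ + c * (s - x₀) := funext fun s => hpdt (s, y₀, t₀)
    rw [heq]
    have h0 := (hasDerivAt_const x₀ r₀).add (ix.const_mul c)
    convert h0 using 1
    all_goals first | rfl | ring
  have hγ1 : HasDerivAt (fun s : ℝ => ((s, y₀, t₀, u (s, y₀, t₀), pdx u (s, y₀, t₀),
      pdy u (s, y₀, t₀), pdt u (s, y₀, t₀)) : ℝ × ℝ × ℝ × ℝ × ℝ × ℝ × ℝ))
      ((1, 0, 0, p₀, a, b, c) : ℝ × ℝ × ℝ × ℝ × ℝ × ℝ × ℝ) x₀ :=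
    (hasDerivAt_id x₀).prodMk ((hasDerivAt_const x₀ y₀).prodMk ((hasDerivAt_const x₀ t₀).prodMk
      (hu1.prodMk (hp1.prodMk (hq1.prodMk hr1)))))
  have hc1 : HasDerivAt (fun s : ℝ => φ (s, y₀, t₀, u (s, y₀, t₀), pdx u (s, y₀, t₀),
      pdy u (s, y₀, t₀), pdt u (s, y₀, t₀)))
      (fderiv ℝ φ X ((1, 0, 0, p₀, a, b, c) : ℝ × ℝ × ℝ × ℝ × ℝ × ℝ × ℝ)) x₀ :=
    hφX.comp_hasDerivAt x₀ hγ1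
  have hline1 : HasDerivAt (fun s : ℝ => ((s, y₀, t₀) : ℝ × ℝ × ℝ)) (1, 0, 0) x₀ :=
    (hasDerivAt_id x₀).prodMk ((hasDerivAt_const x₀ y₀).prodMk (hasDerivAt_const x₀ t₀))
  have hT1 : pdx (fun q : ℝ × ℝ × ℝ =>
      (φ (q.1, q.2.1, q.2.2, u q, pdx u q, pdy u q, pdt u q)).1) (x₀, y₀, t₀)
      = (fderiv ℝ φ X ((1, 0, 0, p₀, a, b, c) : ℝ × ℝ × ℝ × ℝ × ℝ × ℝ × ℝ)).1 := by
    have hgd : DifferentiableAt ℝ (fun q : ℝ × ℝ × ℝ =>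
        (φ (q.1, q.2.1, q.2.2, u q, pdx u q, pdy u q, pdt u q)).1) (x₀, y₀, t₀) :=
      (hcompd (x₀, y₀, t₀)).fst
    have h2 := hgd.hasFDerivAt.comp_hasDerivAt x₀ hline1
    exact h2.unique hc1.fst
  -- ===================== second direction =====================
  have hu2 : HasDerivAt (fun s : ℝ => u (x₀, s, t₀)) q₀ y₀ := by
    have heq : (fun s : ℝ => u (x₀, s, t₀)) = fun s : ℝ =>
        u₀ + p₀ * (x₀ - x₀) + q₀ * (s - y₀) + r₀ * (t₀ - t₀) + a / 2 * (x₀ - x₀) ^ 2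
          + b * ((x₀ - x₀) * (s - y₀)) + c * ((x₀ - x₀) * (t₀ - t₀)) := by
      funext s; simp only [hu]; try ring
    rw [heq]
    have h0 := ((((((hasDerivAt_const y₀ (u₀ + p₀ * (x₀ - x₀)))).add
      (iy.const_mul q₀)).add
      (hasDerivAt_const y₀ (r₀ * (t₀ - t₀)))).add
      (hasDerivAt_const y₀ (a / 2 * (x₀ - x₀) ^ 2))).add
      ((iy.const_mul (x₀ - x₀)).const_mul b)).add
      (hasDerivAt_const y₀ (c * ((x₀ - x₀) * (t₀ - t₀))))
    convert h0 using 1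
    all_goals first | rfl | ring
  have hp2 : HasDerivAt (fun s : ℝ => pdx u (x₀, s, t₀)) b y₀ := by
    have heq : (fun s : ℝ => pdx u (x₀, s, t₀)) = fun s : ℝ =>
        p₀ + a * (x₀ - x₀) + b * (s - y₀) + c * (t₀ - t₀) := funext fun s => hpdx (x₀, s, t₀)
    rw [heq]
    have h0 := (((hasDerivAt_const y₀ (p₀ + a * (x₀ - x₀)))).add (iy.const_mul b)).add
      (hasDerivAt_const y₀ (c * (t₀ - t₀)))
    convert h0 using 1
    all_goals first | rfl | ring
  have hq2 : HasDerivAt (fun s : ℝ => pdy u (x₀, s, t₀)) 0 y₀ := by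
    have heq : (fun s : ℝ => pdy u (x₀, s, t₀)) = fun s : ℝ =>
        q₀ + b * (x₀ - x₀) := funext fun s => hpdy (x₀, s, t₀)
    rw [heq]
    exact hasDerivAt_const y₀ _
  have hr2 : HasDerivAt (fun s : ℝ => pdt u (x₀, s, t₀)) 0 y₀ := by
    have heq : (fun s : ℝ => pdt u (x₀, s, t₀)) = fun s : ℝ =>
        r₀ + c * (x₀ - x₀) := funext fun s => hpdt (x₀, s, t₀)
    rw [heq]
    exact hasDerivAt_const y₀ _
  have hγ2 : HasDerivAt (fun s : ℝ => ((x₀, s, t₀, u (x₀, s, t₀), pdx u (x₀, s, t₀),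
      pdy u (x₀, s, t₀), pdt u (x₀, s, t₀)) : ℝ × ℝ × ℝ × ℝ × ℝ × ℝ × ℝ))
      ((0, 1, 0, q₀, b, 0, 0) : ℝ × ℝ × ℝ × ℝ × ℝ × ℝ × ℝ) y₀ :=
    (hasDerivAt_const y₀ x₀).prodMk ((hasDerivAt_id y₀).prodMk ((hasDerivAt_const y₀ t₀).prodMk
      (hu2.prodMk (hp2.prodMk (hq2.prodMk hr2)))))
  have hc2 : HasDerivAt (fun s : ℝ => φ (x₀, s, t₀, u (x₀, s, t₀), pdx u (x₀, s, t₀),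
      pdy u (x₀, s, t₀), pdt u (x₀, s, t₀)))
      (fderiv ℝ φ X ((0, 1, 0, q₀, b, 0, 0) : ℝ × ℝ × ℝ × ℝ × ℝ × ℝ × ℝ)) y₀ :=
    hφX.comp_hasDerivAt y₀ hγ2
  have hline2 : HasDerivAt (fun s : ℝ => ((x₀, s, t₀) : ℝ × ℝ × ℝ)) (0, 1, 0) y₀ :=
    (hasDerivAt_const y₀ x₀).prodMk ((hasDerivAt_id y₀).prodMk (hasDerivAt_const y₀ t₀))
  have hT2 : pdy (fun q : ℝ × ℝ × ℝ =>
      (φ (q.1, q.2.1, q.2.2, u q, pdx u q, pdy u q, pdt u q)).2.1) (x₀, y₀, t₀)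
      = (fderiv ℝ φ X ((0, 1, 0, q₀, b, 0, 0) : ℝ × ℝ × ℝ × ℝ × ℝ × ℝ × ℝ)).2.1 := by
    have hgd : DifferentiableAt ℝ (fun q : ℝ × ℝ × ℝ =>
        (φ (q.1, q.2.1, q.2.2, u q, pdx u q, pdy u q, pdt u q)).2.1) (x₀, y₀, t₀) :=
      (hcompd (x₀, y₀, t₀)).snd.fst
    have h2 := hgd.hasFDerivAt.comp_hasDerivAt y₀ hline2
    exact h2.unique hc2.snd.fst
  -- ===================== third direction =====================
  have hu3 : HasDerivAt (fun s : ℝ => u (x₀, y₀, s)) r₀ t₀ := by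
    have heq : (fun s : ℝ => u (x₀, y₀, s)) = fun s : ℝ =>
        u₀ + p₀ * (x₀ - x₀) + q₀ * (y₀ - y₀) + r₀ * (s - t₀) + a / 2 * (x₀ - x₀) ^ 2
          + b * ((x₀ - x₀) * (y₀ - y₀)) + c * ((x₀ - x₀) * (s - t₀)) := by
      funext s; simp only [hu]; try ring
    rw [heq]
    have h0 := ((((((hasDerivAt_const t₀ (u₀ + p₀ * (x₀ - x₀) + q₀ * (y₀ - y₀)))).add
      (it.const_mul r₀)).add
      (hasDerivAt_const t₀ (a / 2 * (x₀ - x₀) ^ 2))).add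
      (hasDerivAt_const t₀ (b * ((x₀ - x₀) * (y₀ - y₀))))).add
      ((it.const_mul (x₀ - x₀)).const_mul c))
    convert h0 using 1
    all_goals first | rfl | ring
  have hp3 : HasDerivAt (fun s : ℝ => pdx u (x₀, y₀, s)) c t₀ := by
    have heq : (fun s : ℝ => pdx u (x₀, y₀, s)) = fun s : ℝ =>
        p₀ + a * (x₀ - x₀) + b * (y₀ - y₀) + c * (s - t₀) := funext fun s => hpdx (x₀, y₀, s)
    rw [heq]
    have h0 := ((hasDerivAt_const t₀ (p₀ + a * (x₀ - x₀) + b * (y₀ - y₀)))).add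
      (it.const_mul c)
    convert h0 using 1
    all_goals first | rfl | ring
  have hq3 : HasDerivAt (fun s : ℝ => pdy u (x₀, y₀, s)) 0 t₀ := by
    have heq : (fun s : ℝ => pdy u (x₀, y₀, s)) = fun s : ℝ =>
        q₀ + b * (x₀ - x₀) := funext fun s => hpdy (x₀, y₀, s)
    rw [heq]
    exact hasDerivAt_const t₀ _
  have hr3 : HasDerivAt (fun s : ℝ => pdt u (x₀, y₀, s)) 0 t₀ := by
    have heq : (fun s : ℝ => pdt u (x₀, y₀, s)) = fun s : ℝ =>
        r₀ + c * (x₀ - x₀) := funext fun s => hpdt (x₀, y₀, s)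
    rw [heq]
    exact hasDerivAt_const t₀ _
  have hγ3 : HasDerivAt (fun s : ℝ => ((x₀, y₀, s, u (x₀, y₀, s), pdx u (x₀, y₀, s),
      pdy u (x₀, y₀, s), pdt u (x₀, y₀, s)) : ℝ × ℝ × ℝ × ℝ × ℝ × ℝ × ℝ))
      ((0, 0, 1, r₀, c, 0, 0) : ℝ × ℝ × ℝ × ℝ × ℝ × ℝ × ℝ) t₀ :=
    (hasDerivAt_const t₀ x₀).prodMk ((hasDerivAt_const t₀ y₀).prodMk ((hasDerivAt_id t₀).prodMk
      (hu3.prodMk (hp3.prodMk (hq3.prodMk hr3)))))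
  have hc3 : HasDerivAt (fun s : ℝ => φ (x₀, y₀, s, u (x₀, y₀, s), pdx u (x₀, y₀, s),
      pdy u (x₀, y₀, s), pdt u (x₀, y₀, s)))
      (fderiv ℝ φ X ((0, 0, 1, r₀, c, 0, 0) : ℝ × ℝ × ℝ × ℝ × ℝ × ℝ × ℝ)) t₀ :=
    hφX.comp_hasDerivAt t₀ hγ3
  have hline3 : HasDerivAt (fun s : ℝ => ((x₀, y₀, s) : ℝ × ℝ × ℝ)) (0, 0, 1) t₀ :=
    (hasDerivAt_const t₀ x₀).prodMk ((hasDerivAt_const t₀ y₀).prodMk (hasDerivAt_id t₀))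
  have hT3 : pdt (fun q : ℝ × ℝ × ℝ =>
      (φ (q.1, q.2.1, q.2.2, u q, pdx u q, pdy u q, pdt u q)).2.2) (x₀, y₀, t₀)
      = (fderiv ℝ φ X ((0, 0, 1, r₀, c, 0, 0) : ℝ × ℝ × ℝ × ℝ × ℝ × ℝ × ℝ)).2.2 := by
    have hgd : DifferentiableAt ℝ (fun q : ℝ × ℝ × ℝ =>
        (φ (q.1, q.2.1, q.2.2, u q, pdx u q, pdy u q, pdt u q)).2.2) (x₀, y₀, t₀) :=
      (hcompd (x₀, y₀, t₀)).snd.snd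
    have h2 := hgd.hasFDerivAt.comp_hasDerivAt t₀ hline3
    exact h2.unique hc3.snd.snd
  -- ===================== put everything together =====================
  have hmain := hdiv u husm (x₀, y₀, t₀)
  simp only [totalDiv] at hmain
  rw [hT1, hT2, hT3, hpdx (x₀, y₀, t₀), hpdy (x₀, y₀, t₀), hpdt (x₀, y₀, t₀), hu0] at hmain
  rw [hmain]
  ring

/-- Lemma: `E` is not a Noether symmetry of the exponential
Kohn–Laplace equation: no C¹ vector `φ` of `(x,y,t,u,u_x,u_y,u_t)` has total
divergence along every smooth `u` equal to
`u_x² + u_y² + 4(x²+y²)u_t² + 4y u_x u_t − 4x u_y u_t − 2eᵘ`. -/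
theorem e_not_noether_symmetry :
    ¬ ∃ φ : ℝ × ℝ × ℝ × ℝ × ℝ × ℝ × ℝ → ℝ × ℝ × ℝ, ContDiff ℝ 1 φ ∧
      ∀ u : ℝ × ℝ × ℝ → ℝ, ContDiff ℝ (⊤ : ℕ∞) u → ∀ p : ℝ × ℝ × ℝ,
        totalDiv φ u p
          = (pdx u p) ^ 2 + (pdy u p) ^ 2
            + 4 * (p.1 ^ 2 + p.2.1 ^ 2) * (pdt u p) ^ 2
            + 4 * p.2.1 * pdx u p * pdt u p - 4 * p.1 * pdy u p * pdt u p
            - 2 * Real.exp (u p) := by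
  rintro ⟨φ, hφ, hdiv⟩
  exact my_no_noether φ hφ (my_master φ hφ hdiv)
end

section
/- (Lemma: Z is not a Noether symmetry of the homogeneous Kohn–Laplace equation.) There is no C¹ map φ = (φ¹,φ²,φ³) of the seven variables (x,y,t,u,p,q,r) with values in ℝ³ such that for every smooth function u : ℝ³ → ℝ and every point (x,y,t) ∈ ℝ³, the total divergence of φ along u equals u_x² + u_y² + 4(x²+y²)u_t² + 4y·u_x·u_t − 4x·u_y·u_t; equivalently, for the dilation Z = x∂_x + y∂_y + 2t∂_t and the Lagrangian L = ½u_x² + ½u_y² + 2(x²+y²)u_t² + 2y·u_x·u_t − 2x·u_y·u_t of the equation Δ_{H¹}u = 0, the expression Z^(1)L + 4L = 2L is not a total divergence. -/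
set_option maxHeartbeats 2000000 in
/-- Lemma: `Z` is not a Noether symmetry of the homogeneous
Kohn–Laplace equation: no C¹ vector `φ` of `(x,y,t,u,u_x,u_y,u_t)` has total
divergence along every smooth `u` equal to
`u_x² + u_y² + 4(x²+y²)u_t² + 4y u_x u_t − 4x u_y u_t` (which is
`Z^(1)L + 4L = 2L` for the dilation `Z = x∂_x + y∂_y + 2t∂_t`). -/
theorem z_not_noether_symmetry :
    ¬ ∃ φ : ℝ × ℝ × ℝ × ℝ × ℝ × ℝ × ℝ → ℝ × ℝ × ℝ, ContDiff ℝ 1 φ ∧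
      ∀ u : ℝ × ℝ × ℝ → ℝ, ContDiff ℝ (⊤ : ℕ∞) u → ∀ p : ℝ × ℝ × ℝ,
        totalDiv φ u p
          = (pdx u p) ^ 2 + (pdy u p) ^ 2
            + 4 * (p.1 ^ 2 + p.2.1 ^ 2) * (pdt u p) ^ 2
            + 4 * p.2.1 * pdx u p * pdt u p - 4 * p.1 * pdy u p * pdt u p := by
  rintro ⟨φ, hφ, hid⟩
  have master : ∀ x y t u₀ p q r a e f : ℝ,
      (fderiv ℝ φ (x,y,t,u₀,p,q,r) (1,0,0,p,a,e,f)).1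
      + (fderiv ℝ φ (x,y,t,u₀,p,q,r) (0,1,0,q,e,0,0)).2.1
      + (fderiv ℝ φ (x,y,t,u₀,p,q,r) (0,0,1,r,f,0,0)).2.2
      = p^2 + q^2 + 4*(x^2+y^2)*r^2 + 4*y*p*r - 4*x*q*r := by
    intro x y t u₀ p q r a e f
    -- the test function
    have hX : ∀ ξ : ℝ × ℝ × ℝ, HasFDerivAt (fun w : ℝ × ℝ × ℝ => w.1)
        (ContinuousLinearMap.fst ℝ ℝ (ℝ × ℝ)) ξ := fun ξ => hasFDerivAt_fst
    have hY : ∀ ξ : ℝ × ℝ × ℝ, HasFDerivAt (fun w : ℝ × ℝ × ℝ => w.2.1)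
        ((ContinuousLinearMap.fst ℝ ℝ ℝ).comp (ContinuousLinearMap.snd ℝ ℝ (ℝ × ℝ))) ξ :=
      fun ξ => hasFDerivAt_fst.comp ξ hasFDerivAt_snd
    have hT : ∀ ξ : ℝ × ℝ × ℝ, HasFDerivAt (fun w : ℝ × ℝ × ℝ => w.2.2)
        ((ContinuousLinearMap.snd ℝ ℝ ℝ).comp (ContinuousLinearMap.snd ℝ ℝ (ℝ × ℝ))) ξ :=
      fun ξ => hasFDerivAt_snd.comp ξ hasFDerivAt_snd
    have hXx := fun ξ : ℝ × ℝ × ℝ => (hX ξ).sub_const x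
    have hYy := fun ξ : ℝ × ℝ × ℝ => (hY ξ).sub_const y
    have hTt := fun ξ : ℝ × ℝ × ℝ => (hT ξ).sub_const t
    have hu := fun ξ : ℝ × ℝ × ℝ =>
      ((((((hXx ξ).const_mul p).const_add u₀).add ((hYy ξ).const_mul q)).add
        ((hTt ξ).const_mul r)).add ((((hXx ξ).mul (hXx ξ))).const_mul (a/2))).add
        ((((hXx ξ).mul (hYy ξ)).const_mul e).add (((hXx ξ).mul (hTt ξ)).const_mul f))
    set u : ℝ × ℝ × ℝ → ℝ := fun w =>
      u₀ + p * (w.1 - x) + q * (w.2.1 - y) + r * (w.2.2 - t)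
        + a/2 * ((w.1 - x) * (w.1 - x)) + (e * ((w.1 - x) * (w.2.1 - y)) + f * ((w.1 - x) * (w.2.2 - t)))
      with hu_def
    have hu' : ∀ ξ : ℝ × ℝ × ℝ, HasFDerivAt u _ ξ := hu
    have husmooth : ContDiff ℝ (⊤ : ℕ∞) u := by
      unfold u
      fun_prop
    have hux : ∀ ξ : ℝ × ℝ × ℝ,
        pdx u ξ = p + a * (ξ.1 - x) + (e * (ξ.2.1 - y) + f * (ξ.2.2 - t)) := by
      intro ξ
      show fderiv ℝ u ξ (1,0,0) = _
      rw [(hu' ξ).fderiv]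
      simp
      ring
    have huy : ∀ ξ : ℝ × ℝ × ℝ, pdy u ξ = q + e * (ξ.1 - x) := by
      intro ξ
      show fderiv ℝ u ξ (0,1,0) = _
      rw [(hu' ξ).fderiv]
      simp
    have hut : ∀ ξ : ℝ × ℝ × ℝ, pdt u ξ = r + f * (ξ.1 - x) := by
      intro ξ
      show fderiv ℝ u ξ (0,0,1) = _
      rw [(hu' ξ).fderiv]
      simp
    have hA : (fun q' : ℝ × ℝ × ℝ => (q'.1, q'.2.1, q'.2.2, u q', pdx u q', pdy u q', pdt u q'))
        = (fun w : ℝ × ℝ × ℝ => (w.1, w.2.1, w.2.2, u w,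
            p + a * (w.1 - x) + (e * (w.2.1 - y) + f * (w.2.2 - t)),
            q + e * (w.1 - x), r + f * (w.1 - x))) := by
      funext w
      rw [hux w, huy w, hut w]
    have hc5 := fun w : ℝ × ℝ × ℝ =>
      (((hXx w).const_mul a).const_add p).add (((hYy w).const_mul e).add ((hTt w).const_mul f))
    have hc6 := fun w : ℝ × ℝ × ℝ => ((hXx w).const_mul e).const_add q
    have hc7 := fun w : ℝ × ℝ × ℝ => ((hXx w).const_mul f).const_add r
    have hK := (hX (x,y,t)).prodMk ((hY (x,y,t)).prodMk ((hT (x,y,t)).prodMk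
      ((hu' (x,y,t)).prodMk ((hc5 (x,y,t)).prodMk ((hc6 (x,y,t)).prodMk (hc7 (x,y,t)))))))
    have hKval : ((x,y,t) : ℝ × ℝ × ℝ).1 = x := rfl
    have huval : u (x,y,t) = u₀ := by simp [hu_def]
    have hφz := ((hφ.differentiable one_ne_zero) (x,y,t,u₀,p,q,r)).hasFDerivAt
    have hφz' : HasFDerivAt φ (fderiv ℝ φ (x,y,t,u₀,p,q,r))
        (((x,y,t) : ℝ × ℝ × ℝ).1, ((x,y,t) : ℝ × ℝ × ℝ).2.1, ((x,y,t) : ℝ × ℝ × ℝ).2.2, u (x,y,t),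
          p + a * (((x,y,t) : ℝ × ℝ × ℝ).1 - x) + (e * (((x,y,t) : ℝ × ℝ × ℝ).2.1 - y)
            + f * (((x,y,t) : ℝ × ℝ × ℝ).2.2 - t)),
          q + e * (((x,y,t) : ℝ × ℝ × ℝ).1 - x), r + f * (((x,y,t) : ℝ × ℝ × ℝ).1 - x)) := by
      have : (((x,y,t) : ℝ × ℝ × ℝ).1, ((x,y,t) : ℝ × ℝ × ℝ).2.1, ((x,y,t) : ℝ × ℝ × ℝ).2.2, u (x,y,t),
          p + a * (((x,y,t) : ℝ × ℝ × ℝ).1 - x) + (e * (((x,y,t) : ℝ × ℝ × ℝ).2.1 - y)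
            + f * (((x,y,t) : ℝ × ℝ × ℝ).2.2 - t)),
          q + e * (((x,y,t) : ℝ × ℝ × ℝ).1 - x), r + f * (((x,y,t) : ℝ × ℝ × ℝ).1 - x))
          = ((x,y,t,u₀,p,q,r) : ℝ × ℝ × ℝ × ℝ × ℝ × ℝ × ℝ) := by
        simp [huval]
      rw [this]
      exact hφz
    have hcomp := hφz'.comp ((x,y,t) : ℝ × ℝ × ℝ) hK
    have hF1 := (hcomp.fst).congr_of_eventuallyEq (Filter.Eventually.of_forall
      (fun w : ℝ × ℝ × ℝ => by
        show (φ (w.1, w.2.1, w.2.2, u w, pdx u w, pdy u w, pdt u w)).1 = _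
        rw [hux w, huy w, hut w]
        rfl))
    have e1 : pdx (fun q' : ℝ × ℝ × ℝ =>
        (φ (q'.1, q'.2.1, q'.2.2, u q', pdx u q', pdy u q', pdt u q')).1) (x,y,t)
        = (fderiv ℝ φ (x,y,t,u₀,p,q,r) (1,0,0,p,a,e,f)).1 := by
      show fderiv ℝ (fun q' : ℝ × ℝ × ℝ =>
        (φ (q'.1, q'.2.1, q'.2.2, u q', pdx u q', pdy u q', pdt u q')).1) (x,y,t) (1,0,0) = _
      rw [hF1.fderiv]
      simp
    have hF2 := ((hcomp.snd).fst).congr_of_eventuallyEq (Filter.Eventually.of_forall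
      (fun w : ℝ × ℝ × ℝ => by
        show (φ (w.1, w.2.1, w.2.2, u w, pdx u w, pdy u w, pdt u w)).2.1 = _
        rw [hux w, huy w, hut w]
        rfl))
    have e2 : pdy (fun q' : ℝ × ℝ × ℝ =>
        (φ (q'.1, q'.2.1, q'.2.2, u q', pdx u q', pdy u q', pdt u q')).2.1) (x,y,t)
        = (fderiv ℝ φ (x,y,t,u₀,p,q,r) (0,1,0,q,e,0,0)).2.1 := by
      show fderiv ℝ (fun q' : ℝ × ℝ × ℝ =>
        (φ (q'.1, q'.2.1, q'.2.2, u q', pdx u q', pdy u q', pdt u q')).2.1) (x,y,t) (0,1,0) = _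
      rw [hF2.fderiv]
      simp
    have hF3 := ((hcomp.snd).snd).congr_of_eventuallyEq (Filter.Eventually.of_forall
      (fun w : ℝ × ℝ × ℝ => by
        show (φ (w.1, w.2.1, w.2.2, u w, pdx u w, pdy u w, pdt u w)).2.2 = _
        rw [hux w, huy w, hut w]
        rfl))
    have e3 : pdt (fun q' : ℝ × ℝ × ℝ =>
        (φ (q'.1, q'.2.1, q'.2.2, u q', pdx u q', pdy u q', pdt u q')).2.2) (x,y,t)
        = (fderiv ℝ φ (x,y,t,u₀,p,q,r) (0,0,1,r,f,0,0)).2.2 := by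
      show fderiv ℝ (fun q' : ℝ × ℝ × ℝ =>
        (φ (q'.1, q'.2.1, q'.2.2, u q', pdx u q', pdy u q', pdt u q')).2.2) (x,y,t) (0,0,1) = _
      rw [hF3.fderiv]
      simp
    have hfinal := hid u husmooth (x,y,t)
    simp only [totalDiv] at hfinal
    rw [e1, e2, e3, hux, huy, hut] at hfinal
    simp at hfinal
    linear_combination hfinal
  have hφd : Differentiable ℝ φ := hφ.differentiable one_ne_zero
  set f1 : ℝ × ℝ × ℝ × ℝ × ℝ × ℝ × ℝ → ℝ := fun w => (φ w).1 with hf1def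
  set f2 : ℝ × ℝ × ℝ × ℝ × ℝ × ℝ × ℝ → ℝ := fun w => (φ w).2.1 with hf2def
  set f3 : ℝ × ℝ × ℝ × ℝ × ℝ × ℝ × ℝ → ℝ := fun w => (φ w).2.2 with hf3def
  have hd1 : Differentiable ℝ f1 := fun w => ((hφd w).hasFDerivAt.fst).differentiableAt
  have hd2 : Differentiable ℝ f2 := fun w => (((hφd w).hasFDerivAt.snd).fst).differentiableAt
  have hd3 : Differentiable ℝ f3 := fun w => (((hφd w).hasFDerivAt.snd).snd).differentiableAt
  have hconv1 : ∀ z v : ℝ × ℝ × ℝ × ℝ × ℝ × ℝ × ℝ, fderiv ℝ f1 z v = (fderiv ℝ φ z v).1 := by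
    intro z v
    rw [((hφd z).hasFDerivAt.fst).fderiv]
    rfl
  have hconv2 : ∀ z v : ℝ × ℝ × ℝ × ℝ × ℝ × ℝ × ℝ, fderiv ℝ f2 z v = (fderiv ℝ φ z v).2.1 := by
    intro z v
    rw [(((hφd z).hasFDerivAt.snd).fst).fderiv]
    rfl
  have hconv3 : ∀ z v : ℝ × ℝ × ℝ × ℝ × ℝ × ℝ × ℝ, fderiv ℝ f3 z v = (fderiv ℝ φ z v).2.2 := by
    intro z v
    rw [(((hφd z).hasFDerivAt.snd).snd).fderiv]
    rfl
  set E4 : ℝ × ℝ × ℝ × ℝ × ℝ × ℝ × ℝ := (0,0,0,1,0,0,0) with hE4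
  set E5 : ℝ × ℝ × ℝ × ℝ × ℝ × ℝ × ℝ := (0,0,0,0,1,0,0) with hE5
  set E6 : ℝ × ℝ × ℝ × ℝ × ℝ × ℝ × ℝ := (0,0,0,0,0,1,0) with hE6
  set E7 : ℝ × ℝ × ℝ × ℝ × ℝ × ℝ × ℝ := (0,0,0,0,0,0,1) with hE7
  set V2 : ℝ × ℝ × ℝ × ℝ × ℝ × ℝ × ℝ := (0,1,0,0,0,0,0) with hV2
  set V3 : ℝ × ℝ × ℝ × ℝ × ℝ × ℝ × ℝ := (0,0,1,0,0,0,0) with hV3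
  -- A : divergence identity for linear test functions
  have hA : ∀ x y t u₀ p q r : ℝ,
      fderiv ℝ f1 (x,y,t,u₀,p,q,r) (1,0,0,p,0,0,0)
      + fderiv ℝ f2 (x,y,t,u₀,p,q,r) (0,1,0,q,0,0,0)
      + fderiv ℝ f3 (x,y,t,u₀,p,q,r) (0,0,1,r,0,0,0)
      = p^2 + q^2 + 4*(x^2+y^2)*r^2 + 4*y*p*r - 4*x*q*r := by
    intro x y t u₀ p q r
    rw [hconv1, hconv2, hconv3]
    exact master x y t u₀ p q r 0 0 0
  -- B : coefficient of u_xx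
  have hB : ∀ z : ℝ × ℝ × ℝ × ℝ × ℝ × ℝ × ℝ, fderiv ℝ f1 z E5 = 0 := by
    rintro ⟨x, y, t, u₀, p, q, r⟩
    have h1 := master x y t u₀ p q r 1 0 0
    have h0 := master x y t u₀ p q r 0 0 0
    rw [show ((1:ℝ),(0:ℝ),(0:ℝ),p,(1:ℝ),(0:ℝ),(0:ℝ))
        = ((1:ℝ),(0:ℝ),(0:ℝ),p,(0:ℝ),(0:ℝ),(0:ℝ)) + E5 from by simp [hE5], map_add] at h1
    rw [hconv1]
    simp only [Prod.fst_add] at h1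
    linarith
  -- C : coefficient of u_xy
  have hC : ∀ z : ℝ × ℝ × ℝ × ℝ × ℝ × ℝ × ℝ,
      fderiv ℝ f2 z E5 = - fderiv ℝ f1 z E6 := by
    rintro ⟨x, y, t, u₀, p, q, r⟩
    have h1 := master x y t u₀ p q r 0 1 0
    have h0 := master x y t u₀ p q r 0 0 0
    rw [show ((1:ℝ),(0:ℝ),(0:ℝ),p,(0:ℝ),(1:ℝ),(0:ℝ))
        = ((1:ℝ),(0:ℝ),(0:ℝ),p,(0:ℝ),(0:ℝ),(0:ℝ)) + E6 from by simp [hE6], map_add] at h1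
    rw [show ((0:ℝ),(1:ℝ),(0:ℝ),q,(1:ℝ),(0:ℝ),(0:ℝ))
        = ((0:ℝ),(1:ℝ),(0:ℝ),q,(0:ℝ),(0:ℝ),(0:ℝ)) + E5 from by simp [hE5], map_add] at h1
    rw [hconv1, hconv2]
    simp only [Prod.fst_add, Prod.snd_add] at h1
    linarith
  -- D : coefficient of u_xt
  have hD : ∀ z : ℝ × ℝ × ℝ × ℝ × ℝ × ℝ × ℝ,
      fderiv ℝ f3 z E5 = - fderiv ℝ f1 z E7 := by
    rintro ⟨x, y, t, u₀, p, q, r⟩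
    have h1 := master x y t u₀ p q r 0 0 1
    have h0 := master x y t u₀ p q r 0 0 0
    rw [show ((1:ℝ),(0:ℝ),(0:ℝ),p,(0:ℝ),(0:ℝ),(1:ℝ))
        = ((1:ℝ),(0:ℝ),(0:ℝ),p,(0:ℝ),(0:ℝ),(0:ℝ)) + E7 from by simp [hE7], map_add] at h1
    rw [show ((0:ℝ),(0:ℝ),(1:ℝ),r,(1:ℝ),(0:ℝ),(0:ℝ))
        = ((0:ℝ),(0:ℝ),(1:ℝ),r,(0:ℝ),(0:ℝ),(0:ℝ)) + E5 from by simp [hE5], map_add] at h1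
    rw [hconv1, hconv3]
    simp only [Prod.fst_add, Prod.snd_add] at h1
    linarith
  -- f1 is invariant under translations in the E5 direction
  have hline1 : ∀ (z : ℝ × ℝ × ℝ × ℝ × ℝ × ℝ × ℝ) (s : ℝ),
      HasDerivAt (fun σ : ℝ => f1 (z + σ • E5)) (fderiv ℝ f1 (z + s • E5) E5) s := by
    intro z s
    have ht : HasDerivAt (fun σ : ℝ => z + σ • E5) E5 s := by
      simpa using ((hasDerivAt_id s).smul_const E5).const_add z
    exact (hd1 _).hasFDerivAt.comp_hasDerivAt s ht
  have hT1 : ∀ (z : ℝ × ℝ × ℝ × ℝ × ℝ × ℝ × ℝ) (s : ℝ), f1 (z + s • E5) = f1 z := by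
    intro z s
    have hconst := is_const_of_deriv_eq_zero (f := fun σ : ℝ => f1 (z + σ • E5))
      (fun σ => (hline1 z σ).differentiableAt)
      (fun σ => by rw [(hline1 z σ).deriv]; exact hB _)
    simpa using hconst s 0
  -- hence so is its derivative
  have hT1' : ∀ (z : ℝ × ℝ × ℝ × ℝ × ℝ × ℝ × ℝ) (s : ℝ),
      fderiv ℝ f1 (z + s • E5) = fderiv ℝ f1 z := by
    intro z s
    have htrans : HasFDerivAt (fun w : ℝ × ℝ × ℝ × ℝ × ℝ × ℝ × ℝ => w + s • E5)
        (ContinuousLinearMap.id ℝ _) z := by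
      simpa using (hasFDerivAt_id z).add_const (s • E5)
    have h2 := ((hd1 (z + s • E5)).hasFDerivAt).comp z htrans
    have h3 := h2.congr_of_eventuallyEq
      (Filter.Eventually.of_forall fun w => (hT1 w s).symm)
    rw [h3.fderiv]
    simp
  -- f2, f3 are affine along E5 lines
  have hT2 : ∀ (z : ℝ × ℝ × ℝ × ℝ × ℝ × ℝ × ℝ) (s : ℝ),
      f2 (z + s • E5) = f2 z - s * fderiv ℝ f1 z E6 := by
    intro z s
    have hg : ∀ σ : ℝ, HasDerivAt
        (fun σ : ℝ => f2 (z + σ • E5) + σ * fderiv ℝ f1 z E6)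
        (fderiv ℝ f2 (z + σ • E5) E5 + fderiv ℝ f1 z E6) σ := by
      intro σ
      have ht : HasDerivAt (fun σ : ℝ => z + σ • E5) E5 σ := by
        simpa using ((hasDerivAt_id σ).smul_const E5).const_add z
      exact ((hd2 _).hasFDerivAt.comp_hasDerivAt σ ht).add
        (hasDerivAt_mul_const (fderiv ℝ f1 z E6))
    have hconst := is_const_of_deriv_eq_zero
      (f := fun σ : ℝ => f2 (z + σ • E5) + σ * fderiv ℝ f1 z E6)
      (fun σ => (hg σ).differentiableAt)
      (fun σ => by
        rw [(hg σ).deriv, hC, hT1' z σ]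
        ring)
    have := hconst s 0
    simp at this
    linarith
  have hT3 : ∀ (z : ℝ × ℝ × ℝ × ℝ × ℝ × ℝ × ℝ) (s : ℝ),
      f3 (z + s • E5) = f3 z - s * fderiv ℝ f1 z E7 := by
    intro z s
    have hg : ∀ σ : ℝ, HasDerivAt
        (fun σ : ℝ => f3 (z + σ • E5) + σ * fderiv ℝ f1 z E7)
        (fderiv ℝ f3 (z + σ • E5) E5 + fderiv ℝ f1 z E7) σ := by
      intro σ
      have ht : HasDerivAt (fun σ : ℝ => z + σ • E5) E5 σ := by
        simpa using ((hasDerivAt_id σ).smul_const E5).const_add z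
      exact ((hd3 _).hasFDerivAt.comp_hasDerivAt σ ht).add
        (hasDerivAt_mul_const (fderiv ℝ f1 z E7))
    have hconst := is_const_of_deriv_eq_zero
      (f := fun σ : ℝ => f3 (z + σ • E5) + σ * fderiv ℝ f1 z E7)
      (fun σ => (hg σ).differentiableAt)
      (fun σ => by
        rw [(hg σ).deriv, hD, hT1' z σ]
        ring)
    have := hconst s 0
    simp at this
    linarith
  -- ψ and χ are differentiable (being differences of differentiable functions)
  set ψ : ℝ × ℝ × ℝ × ℝ × ℝ × ℝ × ℝ → ℝ := fun z => fderiv ℝ f1 z E6 with hψdef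
  set χ : ℝ × ℝ × ℝ × ℝ × ℝ × ℝ × ℝ → ℝ := fun z => fderiv ℝ f1 z E7 with hχdef
  have hψeq : ψ = fun z => f2 z - f2 (z + E5) := by
    funext z
    have := hT2 z 1
    simp at this
    rw [hψdef]
    linarith
  have hχeq : χ = fun z => f3 z - f3 (z + E5) := by
    funext z
    have := hT3 z 1
    simp at this
    rw [hχdef]
    linarith
  have hψd : DifferentiableAt ℝ ψ 0 := by
    rw [hψeq]
    exact (hd2 0).sub ((hd2 (0 + E5)).comp (f := fun z => z + E5) 0 ((differentiable_id.add_const E5) 0))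
  have hχd : DifferentiableAt ℝ χ 0 := by
    rw [hχeq]
    exact (hd3 0).sub ((hd3 (0 + E5)).comp (f := fun z => z + E5) 0 ((differentiable_id.add_const E5) 0))
  -- derivative of f2 along the p-line at 0
  have hfd2 : ∀ s : ℝ, fderiv ℝ f2 (s • E5) V2
      = fderiv ℝ f2 0 V2 - s * fderiv ℝ ψ 0 V2 := by
    intro s
    have htrans : HasFDerivAt (fun w : ℝ × ℝ × ℝ × ℝ × ℝ × ℝ × ℝ => w + s • E5)
        (ContinuousLinearMap.id ℝ _) 0 := by
      simpa using (hasFDerivAt_id (0 : ℝ × ℝ × ℝ × ℝ × ℝ × ℝ × ℝ)).add_const (s • E5)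
    have hL0 := ((hd2 (0 + s • E5)).hasFDerivAt).comp 0 htrans
    have hR : HasFDerivAt (fun z => f2 z - s * ψ z)
        (fderiv ℝ f2 0 - s • fderiv ℝ ψ 0) 0 :=
      ((hd2 0).hasFDerivAt).sub (hψd.hasFDerivAt.const_mul s)
    have hL := hR.congr_of_eventuallyEq
      (Filter.Eventually.of_forall fun w => by
        show f2 (w + s • E5) = f2 w - s * ψ w
        rw [hT2 w s, hψdef])
    have huniq := hL0.unique hL
    have := congrArg (fun L => L V2) huniq
    simpa using this
  have hfd3 : ∀ s : ℝ, fderiv ℝ f3 (s • E5) V3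
      = fderiv ℝ f3 0 V3 - s * fderiv ℝ χ 0 V3 := by
    intro s
    have htrans : HasFDerivAt (fun w : ℝ × ℝ × ℝ × ℝ × ℝ × ℝ × ℝ => w + s • E5)
        (ContinuousLinearMap.id ℝ _) 0 := by
      simpa using (hasFDerivAt_id (0 : ℝ × ℝ × ℝ × ℝ × ℝ × ℝ × ℝ)).add_const (s • E5)
    have hL0 := ((hd3 (0 + s • E5)).hasFDerivAt).comp 0 htrans
    have hR : HasFDerivAt (fun z => f3 z - s * χ z)
        (fderiv ℝ f3 0 - s • fderiv ℝ χ 0) 0 :=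
      ((hd3 0).hasFDerivAt).sub (hχd.hasFDerivAt.const_mul s)
    have hL := hR.congr_of_eventuallyEq
      (Filter.Eventually.of_forall fun w => by
        show f3 (w + s • E5) = f3 w - s * χ w
        rw [hT3 w s, hχdef])
    have huniq := hL0.unique hL
    have := congrArg (fun L => L V3) huniq
    simpa using this
  -- the key one-parameter identity
  have hkey : ∀ s : ℝ,
      s * (fderiv ℝ f1 0 E4 - fderiv ℝ ψ 0 V2 - fderiv ℝ χ 0 V3) = s ^ 2 := by
    intro s
    have hAs := hA 0 0 0 0 s 0 0
    have hzs : ((0:ℝ),(0:ℝ),(0:ℝ),(0:ℝ),s,(0:ℝ),(0:ℝ)) = s • E5 := by simp [hE5]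
    have hdir : ((1:ℝ),(0:ℝ),(0:ℝ),s,(0:ℝ),(0:ℝ),(0:ℝ))
        = ((1:ℝ),(0:ℝ),(0:ℝ),(0:ℝ),(0:ℝ),(0:ℝ),(0:ℝ)) + s • E4 := by simp [hE4]
    rw [hzs, hdir] at hAs
    have h0' : ((0:ℝ),(1:ℝ),(0:ℝ),(0:ℝ),(0:ℝ),(0:ℝ),(0:ℝ)) = V2 := by rw [hV2]
    have h0'' : ((0:ℝ),(0:ℝ),(1:ℝ),(0:ℝ),(0:ℝ),(0:ℝ),(0:ℝ)) = V3 := by rw [hV3]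
    rw [h0', h0''] at hAs
    have hz0 : s • E5 = (0 : ℝ × ℝ × ℝ × ℝ × ℝ × ℝ × ℝ) + s • E5 := (zero_add _).symm
    rw [hz0, hT1' 0 s, ← hz0, map_add, map_smul, hfd2 s, hfd3 s] at hAs
    have hA0 := hA 0 0 0 0 0 0 0
    rw [h0', h0''] at hA0
    rw [show ((0:ℝ),(0:ℝ),(0:ℝ),(0:ℝ),(0:ℝ),(0:ℝ),(0:ℝ)) = (0 : ℝ × ℝ × ℝ × ℝ × ℝ × ℝ × ℝ)
      from rfl] at hA0
    simp only [smul_eq_mul] at hAs hA0 ⊢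
    nlinarith [hAs, hA0]
  have h1 := hkey 1
  have h2 := hkey 2
  nlinarith [h1, h2]
end

section
/- (Conservation law for T, general f.) Let f : ℝ → ℝ be continuous and F : ℝ → ℝ differentiable with F′ = f. Let u be a C² solution of Δ_{H¹}u + f(u) = 0 on an open set Ω ⊆ ℝ³. Define on Ω: τ₁ = −2y·u_t² − u_x·u_t, τ₂ = 2x·u_t² − u_y·u_t, τ₃ = ½u_x² + ½u_y² − 2(x²+y²)u_t² − F(u). Then ∂τ₁/∂x + ∂τ₂/∂y + ∂τ₃/∂t = 0 at every point of Ω. -/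
section SecondDerivative

variable {E : Type*} [NormedAddCommGroup E] [NormedSpace ℝ E] {u : E → ℝ} {p : E}

theorem ContDiffAt.differentiableAt_fderiv (hu : ContDiffAt ℝ 2 u p) :
    DifferentiableAt ℝ (fderiv ℝ u) p :=
  (hu.fderiv_right (m := 1) le_rfl).differentiableAt one_ne_zero

theorem ContDiffAt.differentiableAt_fderiv_apply (hu : ContDiffAt ℝ 2 u p) (v : E) :
    DifferentiableAt ℝ (fun q => fderiv ℝ u q v) p :=
  hu.differentiableAt_fderiv.clm_apply (differentiableAt_const v)

theorem fderiv_fderiv_apply_eq (hd : DifferentiableAt ℝ (fderiv ℝ u) p) (v w : E) :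
    fderiv ℝ (fun q => fderiv ℝ u q v) p w = fderiv ℝ (fderiv ℝ u) p w v := by
  simp [fderiv_clm_apply hd (differentiableAt_const v)]

theorem ContDiffAt.fderiv_fderiv_apply_comm (hu : ContDiffAt ℝ 2 u p) (v w : E) :
    fderiv ℝ (fun q => fderiv ℝ u q v) p w = fderiv ℝ (fun q => fderiv ℝ u q w) p v := by
  rw [fderiv_fderiv_apply_eq hu.differentiableAt_fderiv,
    fderiv_fderiv_apply_eq hu.differentiableAt_fderiv]
  exact hu.isSymmSndFDerivAt (by simp) w v

end SecondDerivative

section Heisenberg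

variable {u : ℝ × ℝ × ℝ → ℝ} {p : ℝ × ℝ × ℝ}

theorem pdx_tau_one (hx : DifferentiableAt ℝ (pdx u) p) (ht : DifferentiableAt ℝ (pdt u) p) :
    pdx (fun q => -2 * q.2.1 * pdt u q ^ 2 - pdx u q * pdt u q) p
      = -4 * p.2.1 * pdt u p * pdx (pdt u) p
        - (pdx (pdx u) p * pdt u p + pdx u p * pdx (pdt u) p) := by
  rw [pdx]
  simp (disch := fun_prop) only [fderiv_fun_sub, fderiv_fun_mul, fderiv_fun_pow, fderiv.snd,
    fderiv.fst]
  simp [pdx]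
  ring

theorem pdy_tau_two (hy : DifferentiableAt ℝ (pdy u) p) (ht : DifferentiableAt ℝ (pdt u) p) :
    pdy (fun q => 2 * q.1 * pdt u q ^ 2 - pdy u q * pdt u q) p
      = 4 * p.1 * pdt u p * pdy (pdt u) p
        - (pdy (pdy u) p * pdt u p + pdy u p * pdy (pdt u) p) := by
  rw [pdy]
  simp (disch := fun_prop) only [fderiv_fun_sub, fderiv_fun_mul, fderiv_fun_pow, fderiv.fst]
  simp [pdy]
  ring

theorem pdt_tau_three {f F : ℝ → ℝ} (hF : ∀ s, HasDerivAt F (f s) s)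
    (hu : DifferentiableAt ℝ u p) (hx : DifferentiableAt ℝ (pdx u) p)
    (hy : DifferentiableAt ℝ (pdy u) p) (ht : DifferentiableAt ℝ (pdt u) p) :
    pdt (fun q => (1 / 2) * pdx u q ^ 2 + (1 / 2) * pdy u q ^ 2
        - 2 * (q.1 ^ 2 + q.2.1 ^ 2) * pdt u q ^ 2 - F (u q)) p
      = pdx u p * pdt (pdx u) p + pdy u p * pdt (pdy u) p
        - 4 * (p.1 ^ 2 + p.2.1 ^ 2) * pdt u p * pdt (pdt u) p - f (u p) * pdt u p := by
  have hFu : HasFDerivAt (fun q => F (u q)) (f (u p) • fderiv ℝ u p) p :=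
    (hF (u p)).comp_hasFDerivAt p hu.hasFDerivAt
  rw [pdt]
  simp (disch := fun_prop) only [fderiv_fun_sub _ hFu.differentiableAt, hFu.fderiv]
  simp (disch := fun_prop) only [fderiv_fun_sub, fderiv_fun_add, fderiv_fun_mul, fderiv_fun_pow,
    fderiv.snd, fderiv.fst]
  simp [pdx, pdy, pdt]
  ring

theorem div_tau_eq_neg_pdt_mul {f F : ℝ → ℝ} (hF : ∀ s, HasDerivAt F (f s) s)
    (hu : ContDiffAt ℝ 2 u p) :
    pdx (fun q => -2 * q.2.1 * (pdt u q) ^ 2 - pdx u q * pdt u q) p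
      + pdy (fun q => 2 * q.1 * (pdt u q) ^ 2 - pdy u q * pdt u q) p
      + pdt (fun q => (1 / 2) * (pdx u q) ^ 2 + (1 / 2) * (pdy u q) ^ 2
          - 2 * (q.1 ^ 2 + q.2.1 ^ 2) * (pdt u q) ^ 2 - F (u q)) p
      = -pdt u p * (KohnLaplace u p + f (u p)) := by
  have hx : DifferentiableAt ℝ (pdx u) p := hu.differentiableAt_fderiv_apply _
  have hy : DifferentiableAt ℝ (pdy u) p := hu.differentiableAt_fderiv_apply _
  have ht : DifferentiableAt ℝ (pdt u) p := hu.differentiableAt_fderiv_apply _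
  have hxt : pdx (pdt u) p = pdt (pdx u) p := hu.fderiv_fderiv_apply_comm _ _
  have hyt : pdy (pdt u) p = pdt (pdy u) p := hu.fderiv_fderiv_apply_comm _ _
  rw [pdx_tau_one hx ht, pdy_tau_two hy ht,
    pdt_tau_three hF (hu.differentiableAt two_ne_zero) hx hy ht, hxt, hyt, KohnLaplace]
  ring

end Heisenberg

theorem conservation_law_T_general
    (f F : ℝ → ℝ) (hF : ∀ s, HasDerivAt F (f s) s)
    (Ω : Set (ℝ × ℝ × ℝ)) (hΩ : IsOpen Ω)
    (u : ℝ × ℝ × ℝ → ℝ) (hu : ContDiffOn ℝ 2 u Ω)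
    (hsol : ∀ p ∈ Ω, KohnLaplace u p + f (u p) = 0) :
    ∀ p ∈ Ω,
      pdx (fun q => -2 * q.2.1 * (pdt u q) ^ 2 - pdx u q * pdt u q) p
      + pdy (fun q => 2 * q.1 * (pdt u q) ^ 2 - pdy u q * pdt u q) p
      + pdt (fun q => (1 / 2) * (pdx u q) ^ 2 + (1 / 2) * (pdy u q) ^ 2
          - 2 * (q.1 ^ 2 + q.2.1 ^ 2) * (pdt u q) ^ 2 - F (u q)) p = 0 := by
  intro p hp
  rw [div_tau_eq_neg_pdt_mul hF (hu.contDiffAt (hΩ.mem_nhds hp)), hsol p hp, mul_zero]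

/-- conservation law for the Noether symmetry T, general f:
for a C² solution of Δ_{H¹}u + f(u) = 0 on an open set Ω,
Div(τ) = 0 with τ₁ = −2y u_t² − u_x u_t, τ₂ = 2x u_t² − u_y u_t,
τ₃ = ½u_x² + ½u_y² − 2(x²+y²)u_t² − F(u). -/
theorem conservation_law_T
    (f F : ℝ → ℝ) (hf : Continuous f) (hF : ∀ s, HasDerivAt F (f s) s)
    (Ω : Set (ℝ × ℝ × ℝ)) (hΩ : IsOpen Ω)
    (u : ℝ × ℝ × ℝ → ℝ) (hu : ContDiffOn ℝ 2 u Ω)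
    (hsol : ∀ p ∈ Ω, KohnLaplace u p + f (u p) = 0) :
    ∀ p ∈ Ω,
      pdx (fun q => -2 * q.2.1 * (pdt u q) ^ 2 - pdx u q * pdt u q) p
      + pdy (fun q => 2 * q.1 * (pdt u q) ^ 2 - pdy u q * pdt u q) p
      + pdt (fun q => (1 / 2) * (pdx u q) ^ 2 + (1 / 2) * (pdy u q) ^ 2
          - 2 * (q.1 ^ 2 + q.2.1 ^ 2) * (pdt u q) ^ 2 - F (u q)) p = 0 :=
  conservation_law_T_general f F hF Ω hΩ u hu hsol
end

section
/- (Conservation law for X̃, general f.) Let f : ℝ → ℝ be continuous and F : ℝ → ℝ differentiable with F′ = f. Let u be a C² solution of Δ_{H¹}u + f(u) = 0 on an open set Ω ⊆ ℝ³. Define on Ω: χ₁ = −½u_x² + ½u_y² + 2(x² + 3y²)u_t² + 2y·u_x·u_t − 2x·u_y·u_t − F(u), χ₂ = −4xy·u_t² − u_x·u_y + 2x·u_x·u_t + 2y·u_y·u_t, χ₃ = −3y·u_x² − y·u_y² + 4y(x²+y²)u_t² + 2x·u_x·u_y − 4(x²+y²)u_x·u_t + 2y·F(u). Then ∂χ₁/∂x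 + ∂χ₂/∂y + ∂χ₃/∂t = 0 at every point of Ω. -/
/-! The vector field χ is a Noether current of the Lagrangian `½ |∇_H u|² - F(u)`, whose
Euler–Lagrange operator is `Δ_{H¹} u + f(u)`. Accordingly
`Div χ = (2y u_t - u_x) (Δ_{H¹} u + f(u))` holds for every function that is `C²` near the point:
expanding both sides by the chain rule, they agree once the mixed second derivatives are
identified by symmetry. On a solution the right-hand side vanishes. -/

open ContinuousLinearMap

theorem hasFDerivAt_fderiv_apply {𝕜 E G : Type*} [NontriviallyNormedField 𝕜]
    [NormedAddCommGroup E] [NormedSpace 𝕜 E] [NormedAddCommGroup G] [NormedSpace 𝕜 G]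
    {u : E → G} {p : E} (hu : ContDiffAt 𝕜 2 u p) (v : E) :
    HasFDerivAt (fun q => fderiv 𝕜 u q v) ((fderiv 𝕜 (fderiv 𝕜 u) p).flip v) p := by
  have hD : HasFDerivAt (fderiv 𝕜 u) (fderiv 𝕜 (fderiv 𝕜 u) p) p :=
    ((hu.fderiv_right (m := 1) le_rfl).differentiableAt one_ne_zero).hasFDerivAt
  exact (apply 𝕜 G v).hasFDerivAt.comp p hD

section SecondDerivatives

variable {u : ℝ × ℝ × ℝ → ℝ} {p : ℝ × ℝ × ℝ}

theorem hasFDerivAt_pdx (hu : ContDiffAt ℝ 2 u p) :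
    HasFDerivAt (pdx u) ((fderiv ℝ (fderiv ℝ u) p).flip (1, 0, 0)) p :=
  hasFDerivAt_fderiv_apply hu _

theorem hasFDerivAt_pdy (hu : ContDiffAt ℝ 2 u p) :
    HasFDerivAt (pdy u) ((fderiv ℝ (fderiv ℝ u) p).flip (0, 1, 0)) p :=
  hasFDerivAt_fderiv_apply hu _

theorem hasFDerivAt_pdt (hu : ContDiffAt ℝ 2 u p) :
    HasFDerivAt (pdt u) ((fderiv ℝ (fderiv ℝ u) p).flip (0, 0, 1)) p :=
  hasFDerivAt_fderiv_apply hu _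

end SecondDerivatives

section DirectionalDerivatives

variable {g : ℝ × ℝ × ℝ → ℝ} {L : ℝ × ℝ × ℝ →L[ℝ] ℝ} {p : ℝ × ℝ × ℝ}

theorem HasFDerivAt.pdx_eq (h : HasFDerivAt g L p) : pdx g p = L (1, 0, 0) := by
  rw [pdx, h.fderiv]

theorem HasFDerivAt.pdy_eq (h : HasFDerivAt g L p) : pdy g p = L (0, 1, 0) := by
  rw [pdy, h.fderiv]

theorem HasFDerivAt.pdt_eq (h : HasFDerivAt g L p) : pdt g p = L (0, 0, 1) := by
  rw [pdt, h.fderiv]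

end DirectionalDerivatives

noncomputable def xTildeCurrent₁ (F : ℝ → ℝ) (u : ℝ × ℝ × ℝ → ℝ) : ℝ × ℝ × ℝ → ℝ :=
  fun q => -(1 / 2) * (pdx u q) ^ 2 + (1 / 2) * (pdy u q) ^ 2
    + 2 * (q.1 ^ 2 + 3 * q.2.1 ^ 2) * (pdt u q) ^ 2
    + 2 * q.2.1 * pdx u q * pdt u q - 2 * q.1 * pdy u q * pdt u q - F (u q)

noncomputable def xTildeCurrent₂ (u : ℝ × ℝ × ℝ → ℝ) : ℝ × ℝ × ℝ → ℝ :=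
  fun q => -4 * q.1 * q.2.1 * (pdt u q) ^ 2 - pdx u q * pdy u q
    + 2 * q.1 * pdx u q * pdt u q + 2 * q.2.1 * pdy u q * pdt u q

noncomputable def xTildeCurrent₃ (F : ℝ → ℝ) (u : ℝ × ℝ × ℝ → ℝ) : ℝ × ℝ × ℝ → ℝ :=
  fun q => -3 * q.2.1 * (pdx u q) ^ 2 - q.2.1 * (pdy u q) ^ 2
    + 4 * q.2.1 * (q.1 ^ 2 + q.2.1 ^ 2) * (pdt u q) ^ 2
    + 2 * q.1 * pdx u q * pdy u q
    - 4 * (q.1 ^ 2 + q.2.1 ^ 2) * pdx u q * pdt u q + 2 * q.2.1 * F (u q)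

noncomputable def divergence (χ₁ χ₂ χ₃ : ℝ × ℝ × ℝ → ℝ) : ℝ × ℝ × ℝ → ℝ :=
  fun p => pdx χ₁ p + pdy χ₂ p + pdt χ₃ p

theorem divergence_xTildeCurrent {f F : ℝ → ℝ} {u : ℝ × ℝ × ℝ → ℝ} {p : ℝ × ℝ × ℝ}
    (hu : ContDiffAt ℝ 2 u p) (hF : HasDerivAt F (f (u p)) (u p)) :
    divergence (xTildeCurrent₁ F u) (xTildeCurrent₂ u) (xTildeCurrent₃ F u) p
      = (2 * p.2.1 * pdt u p - pdx u p) * (KohnLaplace u p + f (u p)) := by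
  have hx : HasFDerivAt (fun q : ℝ × ℝ × ℝ => q.1) (fst ℝ ℝ (ℝ × ℝ)) p := hasFDerivAt_fst
  have hy : HasFDerivAt (fun q : ℝ × ℝ × ℝ => q.2.1) ((fst ℝ ℝ ℝ).comp (snd ℝ ℝ (ℝ × ℝ))) p :=
    hasFDerivAt_fst.comp p hasFDerivAt_snd
  have hux := hasFDerivAt_pdx hu
  have huy := hasFDerivAt_pdy hu
  have hut := hasFDerivAt_pdt hu
  have hFu : HasFDerivAt (fun q => F (u q)) (f (u p) • fderiv ℝ u p) p :=
    hF.comp_hasFDerivAt p (hu.differentiableAt two_ne_zero).hasFDerivAt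
  have hχ₁ : HasFDerivAt (xTildeCurrent₁ F u) _ p :=
    (((((hux.pow 2).const_mul (-(1 / 2 : ℝ))).add ((huy.pow 2).const_mul (1 / 2 : ℝ))).add
      ((((hx.pow 2).add ((hy.pow 2).const_mul 3)).const_mul 2).mul (hut.pow 2))).add
      (((hy.const_mul 2).mul hux).mul hut)).sub
      (((hx.const_mul 2).mul huy).mul hut) |>.sub hFu
  have hχ₂ : HasFDerivAt (xTildeCurrent₂ u) _ p :=
    (((((hx.const_mul (-4)).mul hy).mul (hut.pow 2)).sub (hux.mul huy)).add
      (((hx.const_mul 2).mul hux).mul hut)).add (((hy.const_mul 2).mul huy).mul hut)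
  have hχ₃ : HasFDerivAt (xTildeCurrent₃ F u) _ p :=
    ((((((hy.const_mul (-3)).mul (hux.pow 2)).sub (hy.mul (huy.pow 2))).add
      (((hy.const_mul 4).mul ((hx.pow 2).add (hy.pow 2))).mul (hut.pow 2))).add
      (((hx.const_mul 2).mul hux).mul huy)).sub
      (((((hx.pow 2).add (hy.pow 2)).const_mul 4).mul hux).mul hut)).add
      ((hy.const_mul 2).mul hFu)
  have hsym : ∀ v w, fderiv ℝ (fderiv ℝ u) p v w = fderiv ℝ (fderiv ℝ u) p w v :=
    hu.isSymmSndFDerivAt (by simp)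
  rw [divergence, KohnLaplace, hχ₁.pdx_eq, hχ₂.pdy_eq, hχ₃.pdt_eq, hux.pdx_eq, huy.pdy_eq,
    hut.pdt_eq, hux.pdt_eq, huy.pdt_eq]
  simp only [add_apply, sub_apply, smul_apply, smul_eq_mul, comp_apply, flip_apply, coe_fst',
    coe_snd', Pi.add_apply, Pi.mul_apply, pdx, pdy, pdt]
  simp only [hsym (0, 1, 0) (1, 0, 0), hsym (0, 0, 1) (1, 0, 0), hsym (0, 0, 1) (0, 1, 0)]
  ring

theorem conservation_law_Xtilde_general
    (f F : ℝ → ℝ) (hF : ∀ s, HasDerivAt F (f s) s)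
    (Ω : Set (ℝ × ℝ × ℝ)) (hΩ : IsOpen Ω)
    (u : ℝ × ℝ × ℝ → ℝ) (hu : ContDiffOn ℝ 2 u Ω)
    (hsol : ∀ p ∈ Ω, KohnLaplace u p + f (u p) = 0) :
    ∀ p ∈ Ω,
      pdx (fun q => -(1 / 2) * (pdx u q) ^ 2 + (1 / 2) * (pdy u q) ^ 2
          + 2 * (q.1 ^ 2 + 3 * q.2.1 ^ 2) * (pdt u q) ^ 2
          + 2 * q.2.1 * pdx u q * pdt u q - 2 * q.1 * pdy u q * pdt u q - F (u q)) p
      + pdy (fun q => -4 * q.1 * q.2.1 * (pdt u q) ^ 2 - pdx u q * pdy u q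
          + 2 * q.1 * pdx u q * pdt u q + 2 * q.2.1 * pdy u q * pdt u q) p
      + pdt (fun q => -3 * q.2.1 * (pdx u q) ^ 2 - q.2.1 * (pdy u q) ^ 2
          + 4 * q.2.1 * (q.1 ^ 2 + q.2.1 ^ 2) * (pdt u q) ^ 2
          + 2 * q.1 * pdx u q * pdy u q
          - 4 * (q.1 ^ 2 + q.2.1 ^ 2) * pdx u q * pdt u q + 2 * q.2.1 * F (u q)) p = 0 := by
  intro p hp
  have hdiv := divergence_xTildeCurrent (hu.contDiffAt (hΩ.mem_nhds hp)) (hF (u p))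
  rw [hsol p hp, mul_zero] at hdiv
  exact hdiv

/-- conservation law for the Noether symmetry X̃, general f:
for a C² solution of Δ_{H¹}u + f(u) = 0 on an open set Ω, Div(χ) = 0 with
χ₁ = −½u_x² + ½u_y² + 2(x²+3y²)u_t² + 2y u_x u_t − 2x u_y u_t − F(u),
χ₂ = −4xy u_t² − u_x u_y + 2x u_x u_t + 2y u_y u_t,
χ₃ = −3y u_x² − y u_y² + 4y(x²+y²)u_t² + 2x u_x u_y − 4(x²+y²)u_x u_t + 2y F(u). -/
theorem conservation_law_Xtilde
    (f F : ℝ → ℝ) (hf : Continuous f) (hF : ∀ s, HasDerivAt F (f s) s)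
    (Ω : Set (ℝ × ℝ × ℝ)) (hΩ : IsOpen Ω)
    (u : ℝ × ℝ × ℝ → ℝ) (hu : ContDiffOn ℝ 2 u Ω)
    (hsol : ∀ p ∈ Ω, KohnLaplace u p + f (u p) = 0) :
    ∀ p ∈ Ω,
      pdx (fun q => -(1 / 2) * (pdx u q) ^ 2 + (1 / 2) * (pdy u q) ^ 2
          + 2 * (q.1 ^ 2 + 3 * q.2.1 ^ 2) * (pdt u q) ^ 2
          + 2 * q.2.1 * pdx u q * pdt u q - 2 * q.1 * pdy u q * pdt u q - F (u q)) p
      + pdy (fun q => -4 * q.1 * q.2.1 * (pdt u q) ^ 2 - pdx u q * pdy u q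
          + 2 * q.1 * pdx u q * pdt u q + 2 * q.2.1 * pdy u q * pdt u q) p
      + pdt (fun q => -3 * q.2.1 * (pdx u q) ^ 2 - q.2.1 * (pdy u q) ^ 2
          + 4 * q.2.1 * (q.1 ^ 2 + q.2.1 ^ 2) * (pdt u q) ^ 2
          + 2 * q.1 * pdx u q * pdy u q
          - 4 * (q.1 ^ 2 + q.2.1 ^ 2) * pdx u q * pdt u q + 2 * q.2.1 * F (u q)) p = 0 :=
  conservation_law_Xtilde_general f F hF Ω hΩ u hu hsol
end

section
/- (Conservation law for V₁, homogeneous case.) Let u be a C² solution of Δ_{H¹}u = 0 on an open set Ω ⊆ ℝ³. Define on Ω: A₁ = −½(tx−x²y−y³)u_x² + ½(tx−x²y−y³)u_y² + 2t(x³+xy²−ty)u_t² − (x³+xy²+ty)u_x u_y − [t²−(x²+y²)²]u_x u_t − 2t(x²+y²)u_y u_t − t·u·u_x − 2ty·u·u_t + y·u²; A₂ = ½(x³+ty+xy²)u_x² − ½(x³+ty+xy²)u_y² + 2t(x²y+y³+tx)u_t² − (tx−x²y−y³)u_x u_y + 2t(x²+y²)u_x u_t − [t²−(x²+y²)²]u_y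 u_t − t·u·u_y + 2tx·u·u_t − x·u²; A₃ = ½(t²−x⁴−4txy+2x²y²+3y⁴)u_x² + ½(t²+3x⁴+4txy+2x²y²−y⁴)u_y² − 2(x²+y²)[t²−(x²+y²)²]u_t² + 2[t(x²−y²)−2xy(x²+y²)]u_x u_y − 4(x²+y²)(tx−x²y−y³)u_x u_t − 4(x²+y²)(x³+ty+xy²)u_y u_t − 2ty·u·u_x + 2tx·u·u_y − 4t(x²+y²)·u·u_t + 2(x²+y²)u². Then ∂A₁/∂x + ∂A₂/∂y + ∂A₃/∂t = 0 at every point of Ω. -/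
open ContinuousLinearMap

noncomputable section

def currentV1x (u : ℝ × ℝ × ℝ → ℝ) : ℝ × ℝ × ℝ → ℝ := fun q =>
  let x := q.1; let y := q.2.1; let t := q.2.2
  let ux := pdx u q; let uy := pdy u q; let ut := pdt u q; let v := u q;
  (-(1 / 2) * (t * x - x ^ 2 * y - y ^ 3) * ux ^ 2
  + (1 / 2) * (t * x - x ^ 2 * y - y ^ 3) * uy ^ 2
  + 2 * t * (x ^ 3 + x * y ^ 2 - t * y) * ut ^ 2
  - (x ^ 3 + x * y ^ 2 + t * y) * ux * uy
  - (t ^ 2 - (x ^ 2 + y ^ 2) ^ 2) * ux * ut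
  - 2 * t * (x ^ 2 + y ^ 2) * uy * ut
  - t * v * ux - 2 * t * y * v * ut + y * v ^ 2)

def currentV1y (u : ℝ × ℝ × ℝ → ℝ) : ℝ × ℝ × ℝ → ℝ := fun q =>
  let x := q.1; let y := q.2.1; let t := q.2.2
  let ux := pdx u q; let uy := pdy u q; let ut := pdt u q; let v := u q;
  ((1 / 2) * (x ^ 3 + t * y + x * y ^ 2) * ux ^ 2
  - (1 / 2) * (x ^ 3 + t * y + x * y ^ 2) * uy ^ 2
  + 2 * t * (x ^ 2 * y + y ^ 3 + t * x) * ut ^ 2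
  - (t * x - x ^ 2 * y - y ^ 3) * ux * uy
  + 2 * t * (x ^ 2 + y ^ 2) * ux * ut
  - (t ^ 2 - (x ^ 2 + y ^ 2) ^ 2) * uy * ut
  - t * v * uy + 2 * t * x * v * ut - x * v ^ 2)

def currentV1t (u : ℝ × ℝ × ℝ → ℝ) : ℝ × ℝ × ℝ → ℝ := fun q =>
  let x := q.1; let y := q.2.1; let t := q.2.2
  let ux := pdx u q; let uy := pdy u q; let ut := pdt u q; let v := u q;
  ((1 / 2) * (t ^ 2 - x ^ 4 - 4 * t * x * y + 2 * x ^ 2 * y ^ 2 + 3 * y ^ 4) * ux ^ 2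
  + (1 / 2) * (t ^ 2 + 3 * x ^ 4 + 4 * t * x * y + 2 * x ^ 2 * y ^ 2 - y ^ 4) * uy ^ 2
  - 2 * (x ^ 2 + y ^ 2) * (t ^ 2 - (x ^ 2 + y ^ 2) ^ 2) * ut ^ 2
  + 2 * (t * (x ^ 2 - y ^ 2) - 2 * x * y * (x ^ 2 + y ^ 2)) * ux * uy
  - 4 * (x ^ 2 + y ^ 2) * (t * x - x ^ 2 * y - y ^ 3) * ux * ut
  - 4 * (x ^ 2 + y ^ 2) * (x ^ 3 + t * y + x * y ^ 2) * uy * ut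
  - 2 * t * y * v * ux + 2 * t * x * v * uy
  - 4 * t * (x ^ 2 + y ^ 2) * v * ut + 2 * (x ^ 2 + y ^ 2) * v ^ 2)

def characteristicV1 (u : ℝ × ℝ × ℝ → ℝ) : ℝ × ℝ × ℝ → ℝ := fun q =>
  let x := q.1; let y := q.2.1; let t := q.2.2;
  -(t * u q) - (t * x - x ^ 2 * y - y ^ 3) * pdx u q - (t * y + x ^ 3 + x * y ^ 2) * pdy u q
    - (t ^ 2 - (x ^ 2 + y ^ 2) ^ 2) * pdt u q

theorem pdx_currentV1x_add_pdy_currentV1y_add_pdt_currentV1t {u : ℝ × ℝ × ℝ → ℝ}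
    {p : ℝ × ℝ × ℝ} (hu : ContDiffAt ℝ 2 u p) :
    pdx (currentV1x u) p + pdy (currentV1y u) p + pdt (currentV1t u) p
      = characteristicV1 u p * KohnLaplace u p := by
  have hu₁ : DifferentiableAt ℝ u p := hu.differentiableAt (by norm_num)
  have hu₂ : DifferentiableAt ℝ (fderiv ℝ u) p :=
    (hu.fderiv_right (m := 1) (by norm_num)).differentiableAt (by norm_num)
  have hsymm := hu.isSymmSndFDerivAt (by simp)
  unfold currentV1x currentV1y currentV1t characteristicV1 KohnLaplace pdx pdy pdt
  simp (disch := fun_prop) only [fderiv_fun_add, fderiv_fun_sub, fderiv_fun_mul, fderiv_fun_pow,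
    fderiv_fun_neg, fderiv_fun_const, fderiv.fst, fderiv.snd, fderiv_fun_id,
    fderiv_clm_apply, add_apply, sub_apply, smul_apply, neg_apply, comp_apply, flip_apply,
    coe_fst', coe_snd', id_apply, Pi.zero_apply, zero_apply, map_zero, zero_add, smul_eq_mul,
    nsmul_eq_mul]
  rw [hsymm (0, 1, 0) (1, 0, 0), hsymm (0, 0, 1) (1, 0, 0), hsymm (0, 0, 1) (0, 1, 0)]
  ring

end

/-- conservation law for the Noether symmetry V₁ of the
homogeneous Kohn–Laplace equation Δ_{H¹}u = 0: Div(A) = 0, where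
(A₁,A₂,A₃) is the Noether current of
V₁ = (xt−x²y−y³)∂_x + (yt+x³+xy²)∂_y + (t²−(x²+y²)²)∂_t − tu∂_u. -/
theorem conservation_law_V1
    (Ω : Set (ℝ × ℝ × ℝ)) (hΩ : IsOpen Ω)
    (u : ℝ × ℝ × ℝ → ℝ) (hu : ContDiffOn ℝ 2 u Ω)
    (hsol : ∀ p ∈ Ω, KohnLaplace u p = 0) :
    ∀ p ∈ Ω,
      pdx (fun q =>
        let x := q.1; let y := q.2.1; let t := q.2.2
        let ux := pdx u q; let uy := pdy u q; let ut := pdt u q; let v := u q;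
        (-(1 / 2) * (t * x - x ^ 2 * y - y ^ 3) * ux ^ 2
        + (1 / 2) * (t * x - x ^ 2 * y - y ^ 3) * uy ^ 2
        + 2 * t * (x ^ 3 + x * y ^ 2 - t * y) * ut ^ 2
        - (x ^ 3 + x * y ^ 2 + t * y) * ux * uy
        - (t ^ 2 - (x ^ 2 + y ^ 2) ^ 2) * ux * ut
        - 2 * t * (x ^ 2 + y ^ 2) * uy * ut
        - t * v * ux - 2 * t * y * v * ut + y * v ^ 2)) p
      + pdy (fun q =>
        let x := q.1; let y := q.2.1; let t := q.2.2
        let ux := pdx u q; let uy := pdy u q; let ut := pdt u q; let v := u q;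
        ((1 / 2) * (x ^ 3 + t * y + x * y ^ 2) * ux ^ 2
        - (1 / 2) * (x ^ 3 + t * y + x * y ^ 2) * uy ^ 2
        + 2 * t * (x ^ 2 * y + y ^ 3 + t * x) * ut ^ 2
        - (t * x - x ^ 2 * y - y ^ 3) * ux * uy
        + 2 * t * (x ^ 2 + y ^ 2) * ux * ut
        - (t ^ 2 - (x ^ 2 + y ^ 2) ^ 2) * uy * ut
        - t * v * uy + 2 * t * x * v * ut - x * v ^ 2)) p
      + pdt (fun q =>
        let x := q.1; let y := q.2.1; let t := q.2.2
        let ux := pdx u q; let uy := pdy u q; let ut := pdt u q; let v := u q;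
        ((1 / 2) * (t ^ 2 - x ^ 4 - 4 * t * x * y + 2 * x ^ 2 * y ^ 2 + 3 * y ^ 4) * ux ^ 2
        + (1 / 2) * (t ^ 2 + 3 * x ^ 4 + 4 * t * x * y + 2 * x ^ 2 * y ^ 2 - y ^ 4) * uy ^ 2
        - 2 * (x ^ 2 + y ^ 2) * (t ^ 2 - (x ^ 2 + y ^ 2) ^ 2) * ut ^ 2
        + 2 * (t * (x ^ 2 - y ^ 2) - 2 * x * y * (x ^ 2 + y ^ 2)) * ux * uy
        - 4 * (x ^ 2 + y ^ 2) * (t * x - x ^ 2 * y - y ^ 3) * ux * ut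
        - 4 * (x ^ 2 + y ^ 2) * (x ^ 3 + t * y + x * y ^ 2) * uy * ut
        - 2 * t * y * v * ux + 2 * t * x * v * uy
        - 4 * t * (x ^ 2 + y ^ 2) * v * ut + 2 * (x ^ 2 + y ^ 2) * v ^ 2)) p = 0 := by
  intro p hp
  calc _ = characteristicV1 u p * KohnLaplace u p :=
        pdx_currentV1x_add_pdy_currentV1y_add_pdt_currentV1t (hu.contDiffAt (hΩ.mem_nhds hp))
    _ = 0 := by rw [hsol p hp, mul_zero]
end
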